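/- arXiv:1911.08956 — 4 statements merged into one kernel-verified Lean document; each statement's English description precedes it below -/
import Mathlib

section
/- Suppose that for every τ > 0, λ_p(M_τ) is a principal eigenvalue, i.e. there exists φ_τ ∈ χ_Ω⁺⁺ with M_τ[φ_τ] + λ_p(M_τ) φ_τ = 0 on Ω̄ × ℝ. If b(x,t) = b̂(x) + g(t) for some continuous b̂ : Ω̄ → ℝ and some continuous 1-periodic g : ℝ → ℝ, then the function τ ↦ λ_p(M_τ) is constant on (0,∞). -/
open MeasureTheory Set Filter Topology Bornology

noncomputable section

abbrev Euc (N : ℕ) : Type := EuclideanSpace ℝ (Fin N)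

/-- Membership in `χ_Ω`: continuous in `x` on `Ω̄`, `C¹` in `t`, and 1-periodic in `t`. -/
def memChi {N : ℕ} (Ω : Set (Euc N)) (v : Euc N → ℝ → ℝ) : Prop :=
  (∀ t : ℝ, ContinuousOn (fun x => v x t) (closure Ω)) ∧
  (∀ x ∈ closure Ω, ContDiff ℝ 1 (v x)) ∧
  (∀ (x : Euc N) (t : ℝ), v x (t + 1) = v x t)

/-- Positivity on `Ω̄ × ℝ` (membership in `χ_Ω⁺⁺` together with `memChi`). -/
def posOn {N : ℕ} (Ω : Set (Euc N)) (v : Euc N → ℝ → ℝ) : Prop :=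
  ∀ x ∈ closure Ω, ∀ t : ℝ, 0 < v x t

/-- Generalised principal eigenvalue of a time-periodic operator `A`. -/
def lambdaP {N : ℕ} (Ω : Set (Euc N)) (A : (Euc N → ℝ → ℝ) → Euc N → ℝ → ℝ) : ℝ :=
  sSup {l : ℝ | ∃ v, memChi Ω v ∧ posOn Ω v ∧
    ∀ x ∈ closure Ω, ∀ t : ℝ, A v x t + l * v x t ≤ 0}

/-- Generalised principal eigenvalue of an elliptic (time-independent) operator `A`. -/
def lambdaPell {N : ℕ} (Ω : Set (Euc N)) (A : (Euc N → ℝ) → Euc N → ℝ) : ℝ :=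
  sSup {l : ℝ | ∃ v : Euc N → ℝ, ContinuousOn v (closure Ω) ∧
    (∀ x ∈ closure Ω, 0 < v x) ∧ ∀ x ∈ closure Ω, A v x + l * v x ≤ 0}

/-- The operator `M_Ω(b)[v](x,t) = -τ ∂_t v + μ ∫_Ω J(x-y) v(y,t) dy + b v`. -/
def Mop {N : ℕ} (Ω : Set (Euc N)) (J : Euc N → ℝ) (τ μ : ℝ)
    (b : Euc N → ℝ → ℝ) (v : Euc N → ℝ → ℝ) (x : Euc N) (t : ℝ) : ℝ :=
  -τ * deriv (v x) t + μ * (∫ y in Ω, J (x - y) * v y t) + b x t * v x t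

/-- The scaled kernel `J_σ(z) = σ^{-N} J(z/σ)`. -/
def Jsc {N : ℕ} (J : Euc N → ℝ) (σ : ℝ) (z : Euc N) : ℝ := (1 / σ ^ N) * J (σ⁻¹ • z)

/-- The operator `L_Ω^{τ,μ,σ,m}` with weight `h` and coefficient `a`;
`σ ^ m` is the real power `rpow`. -/
def Lop {N : ℕ} (Ω : Set (Euc N)) (J : Euc N → ℝ) (τ μ σ m : ℝ)
    (h : Euc N → ℝ) (a : Euc N → ℝ → ℝ) (v : Euc N → ℝ → ℝ) (x : Euc N) (t : ℝ) : ℝ :=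
  -τ * deriv (v x) t
    + (μ / σ ^ m) * ((∫ y in Ω, Jsc J σ (x - y) * v y t) - h x * v x t)
    + a x t * v x t

/-- Hypothesis (J) on the dispersal kernel. -/
def kernelHyp {N : ℕ} (J : Euc N → ℝ) : Prop :=
  Continuous J ∧ (∀ z, 0 ≤ J z) ∧ (∀ z, J (-z) = J z) ∧
  (∀ z : Euc N, 1 < ‖z‖ → J z = 0) ∧ 0 < J 0 ∧ (∫ z, J z) = 1

/-- `Ω` is a bounded domain (nonempty bounded open connected set). -/
def domainHyp {N : ℕ} (Ω : Set (Euc N)) : Prop :=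
  Ω.Nonempty ∧ IsOpen Ω ∧ IsConnected Ω ∧ IsBounded Ω

/-- Hypothesis (A): `b` is continuous on `Ω̄ × ℝ` and 1-periodic in time. -/
def coeffHyp {N : ℕ} (Ω : Set (Euc N)) (b : Euc N → ℝ → ℝ) : Prop :=
  ContinuousOn (fun p : Euc N × ℝ => b p.1 p.2) (closure Ω ×ˢ (univ : Set ℝ)) ∧
  ∀ (x : Euc N) (t : ℝ), b x (t + 1) = b x t

/-- Hypothesis (F): KPP nonlinearity. -/
def kppHyp {N : ℕ} (Ω : Set (Euc N)) (f : Euc N → ℝ → ℝ → ℝ) : Prop :=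
  (∀ t u : ℝ, ContDiffOn ℝ 1 (fun x => f x t u) (closure Ω)) ∧
  (∀ (x : Euc N) (u : ℝ), Continuous (fun t => f x t u)) ∧
  (∀ (x : Euc N) (t : ℝ), ContDiff ℝ 1 (f x t)) ∧
  (∀ (x : Euc N) (t : ℝ), f x t 0 = 0) ∧
  (∀ (x : Euc N) (t u : ℝ), f x (t + 1) u = f x t u) ∧
  (∀ x ∈ closure Ω, ∀ t : ℝ, StrictAntiOn (fun u => f x t u / u) (Ioi 0)) ∧
  (∃ M > 0, ∀ x ∈ closure Ω, ∀ t u : ℝ, M ≤ u → f x t u ≤ 0)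

/-- `a(x,t) = f_u(x,t,0)`. -/
def linCoeff {N : ℕ} (f : Euc N → ℝ → ℝ → ℝ) (x : Euc N) (t : ℝ) : ℝ := deriv (f x t) 0

/-- `u` is a 1-periodic solution of the nonlocal KPP equation
`τ u_t = (μ/σ^m) ∫_Ω J_σ(x-y)(u(y,t)-u(x,t)) dy + f(x,t,u)` belonging to `χ_Ω`. -/
def isKppSol {N : ℕ} (Ω : Set (Euc N)) (J : Euc N → ℝ) (τ μ σ m : ℝ)
    (f : Euc N → ℝ → ℝ → ℝ) (u : Euc N → ℝ → ℝ) : Prop :=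
  memChi Ω u ∧ ∀ x ∈ closure Ω, ∀ t : ℝ,
    τ * deriv (u x) t =
      (μ / σ ^ m) * (∫ y in Ω, Jsc J σ (x - y) * (u y t - u x t)) + f x t (u x t)

/-- `w` is a positive 1-periodic solution of the ODE `τ w' = F(t, w)`. -/
def isPerOdeSol (τ : ℝ) (F : ℝ → ℝ → ℝ) (w : ℝ → ℝ) : Prop :=
  ContDiff ℝ 1 w ∧ (∀ t, 0 < w t) ∧ (∀ t : ℝ, w (t + 1) = w t) ∧
  ∀ t : ℝ, τ * deriv w t = F t (w t)

/-- The set of admissible values defining `lambdaP` is bounded above. -/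
lemma bddAboveAux {N : ℕ} (Ω : Set (Euc N)) (hne : Ω.Nonempty) (hΩm : MeasurableSet Ω)
    (J : Euc N → ℝ) (hJnn : ∀ z, 0 ≤ J z) {τ μ : ℝ} (hτ : 0 < τ) (hμ : 0 < μ)
    (b : Euc N → ℝ → ℝ)
    (hbc : ContinuousOn (fun p : Euc N × ℝ => b p.1 p.2) (closure Ω ×ˢ (univ : Set ℝ))) :
    BddAbove {l : ℝ | ∃ v, memChi Ω v ∧ posOn Ω v ∧
      ∀ x ∈ closure Ω, ∀ t : ℝ, Mop Ω J τ μ b v x t + l * v x t ≤ 0} := by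
  obtain ⟨x₀, hx₀Ω⟩ := hne
  have hx₀ : x₀ ∈ closure Ω := subset_closure hx₀Ω
  have hbx : Continuous fun t => b x₀ t := by
    have h1 : ContinuousOn (fun t : ℝ => b x₀ t) univ := by
      have : (fun t : ℝ => b x₀ t) =
          (fun p : Euc N × ℝ => b p.1 p.2) ∘ (fun t : ℝ => (x₀, t)) := rfl
      rw [this]
      exact hbc.comp (Continuous.continuousOn (by fun_prop))
        (fun t _ => ⟨hx₀, mem_univ t⟩)
    exact continuousOn_univ.mp h1
  refine ⟨-(∫ t in (0:ℝ)..1, b x₀ t), ?_⟩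
  rintro l ⟨v, ⟨hvx, hvt, hvper⟩, hvpos, hineq⟩
  have hφC : ContDiff ℝ 1 (v x₀) := hvt x₀ hx₀
  have hφpos : ∀ t, 0 < v x₀ t := fun t => hvpos x₀ hx₀ t
  have hφd : Differentiable ℝ (v x₀) := hφC.differentiable one_ne_zero
  have hderiv_cont : Continuous (deriv (v x₀)) := hφC.continuous_deriv le_rfl
  have key : ∀ t, (b x₀ t + l) * v x₀ t ≤ τ * deriv (v x₀) t := by
    intro t
    have h := hineq x₀ hx₀ t
    have hK : 0 ≤ ∫ y in Ω, J (x₀ - y) * v y t :=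
      setIntegral_nonneg hΩm fun y hy =>
        mul_nonneg (hJnn _) (hvpos y (subset_closure hy) t).le
    unfold Mop at h
    nlinarith [mul_nonneg hμ.le hK]
  set L : ℝ → ℝ := fun t => Real.log (v x₀ t) with hL
  have hLd : ∀ t, HasDerivAt L (deriv (v x₀) t / v x₀ t) t := fun t =>
    ((hφd t).hasDerivAt).log (hφpos t).ne'
  have hLint : IntervalIntegrable (fun t => deriv (v x₀) t / v x₀ t) volume 0 1 :=
    (hderiv_cont.div (hφC.continuous) fun t => (hφpos t).ne').intervalIntegrable _ _
  have hint : (∫ t in (0:ℝ)..1, deriv (v x₀) t / v x₀ t) = L 1 - L 0 :=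
    intervalIntegral.integral_eq_sub_of_hasDerivAt (fun t _ => hLd t) hLint
  have hL10 : L 1 - L 0 = 0 := by
    have h10 : v x₀ 1 = v x₀ 0 := by simpa using hvper x₀ 0
    simp [hL, h10]
  have hmono : (∫ t in (0:ℝ)..1, (b x₀ t + l) / τ) ≤
      ∫ t in (0:ℝ)..1, deriv (v x₀) t / v x₀ t := by
    apply intervalIntegral.integral_mono_on zero_le_one
      (((hbx.add continuous_const).div_const τ).intervalIntegrable _ _) hLint
    intro t _
    rw [div_le_div_iff₀ hτ (hφpos t)]
    simp only [Pi.add_apply]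
    have := key t
    nlinarith
  have hsplit : (∫ t in (0:ℝ)..1, (b x₀ t + l) / τ) =
      ((∫ t in (0:ℝ)..1, b x₀ t) + l) / τ := by
    rw [intervalIntegral.integral_div,
      intervalIntegral.integral_add (hbx.intervalIntegrable _ _) intervalIntegrable_const]
    simp
  rw [hint, hL10, hsplit] at hmono
  have h2 : (∫ t in (0:ℝ)..1, b x₀ t) + l ≤ 0 := by
    by_contra hcon
    push_neg at hcon
    have := div_pos hcon hτ
    linarith
  linarith

/-- If `λ_p(M_τ)` is a principal eigenvalue for all `τ > 0` and
`b(x,t) = b̂(x) + g(t)`, then `τ ↦ λ_p(M_τ)` is constant on `(0,∞)`. -/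
theorem stmt_2 {N : ℕ} (hN : 1 ≤ N) (Ω : Set (Euc N)) (hΩ : domainHyp Ω)
    (J : Euc N → ℝ) (hJ : kernelHyp J) (μ : ℝ) (hμ : 0 < μ)
    (b : Euc N → ℝ → ℝ) (hb : coeffHyp Ω b)
    (hpe : ∀ τ ∈ Ioi (0:ℝ), ∃ φ, memChi Ω φ ∧ posOn Ω φ ∧
      ∀ x ∈ closure Ω, ∀ t : ℝ,
        Mop Ω J τ μ b φ x t + lambdaP Ω (Mop Ω J τ μ b) * φ x t = 0)
    (bhat : Euc N → ℝ) (g : ℝ → ℝ)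
    (hbhat : ContinuousOn bhat (closure Ω)) (hg : Continuous g)
    (hgper : ∀ t : ℝ, g (t + 1) = g t)
    (hdec : ∀ x ∈ closure Ω, ∀ t : ℝ, b x t = bhat x + g t) :
    ∀ τ₁ ∈ Ioi (0:ℝ), ∀ τ₂ ∈ Ioi (0:ℝ),
      lambdaP Ω (Mop Ω J τ₁ μ b) = lambdaP Ω (Mop Ω J τ₂ μ b) := by
  classical
  obtain ⟨hne, hΩo, hΩconn, hΩbdd⟩ := hΩ
  obtain ⟨hJc, hJnn, hJsymm, hJsupp, hJ0, hJint⟩ := hJ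
  have hΩm : MeasurableSet Ω := hΩo.measurableSet
  have hclm : MeasurableSet (closure Ω) := isClosed_closure.measurableSet
  have hclcomp : IsCompact (closure Ω) :=
    Metric.isCompact_of_isClosed_isBounded isClosed_closure hΩbdd.closure
  -- a uniform bound for J
  have hMJ : ∃ MJ : ℝ, 0 ≤ MJ ∧ ∀ z, |J z| ≤ MJ := by
    obtain ⟨C, hC⟩ := (isCompact_closedBall (0 : Euc N) 1).exists_bound_of_continuousOn
      hJc.continuousOn
    refine ⟨max C 0, le_max_right _ _, fun z => ?_⟩
    by_cases hz : ‖z‖ ≤ 1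
    · have := hC z (mem_closedBall_zero_iff.mpr hz)
      rw [Real.norm_eq_abs] at this
      exact this.trans (le_max_left _ _)
    · rw [hJsupp z (not_le.mp hz)]
      simpa using le_max_right C 0
  obtain ⟨MJ, hMJ0, hMJb⟩ := hMJ
  -- facts about g and its antiderivative G
  set gbar : ℝ := ∫ s in (0:ℝ)..1, g s with hgbar
  set G : ℝ → ℝ := fun t => ∫ s in (0:ℝ)..t, (g s - gbar) with hGdef
  have hgc : Continuous fun s => g s - gbar := hg.sub continuous_const
  have hGd : ∀ t, HasDerivAt G (g t - gbar) t := fun t =>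
    intervalIntegral.integral_hasDerivAt_right (hgc.intervalIntegrable _ _)
      (hgc.stronglyMeasurableAtFilter _ _) hgc.continuousAt
  have hGc : Continuous G :=
    (Differentiable.continuous fun t => (hGd t).differentiableAt :)
  have hGcd : ContDiff ℝ 1 G := by
    rw [contDiff_one_iff_deriv]
    refine ⟨fun t => (hGd t).differentiableAt, ?_⟩
    have hder : deriv G = fun t => g t - gbar := funext fun t => (hGd t).deriv
    rw [hder]; exact hgc
  have hG0 : G 0 = 0 := intervalIntegral.integral_same
  have hGper : ∀ t, G (t + 1) = G t := by
    intro t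
    have hper : Function.Periodic (fun s => g s - gbar) 1 := fun s => by simp [hgper s]
    have h1 : (∫ s in t..(t+1), (g s - gbar)) = ∫ s in (0:ℝ)..(0+1), (g s - gbar) :=
      hper.intervalIntegral_add_eq t 0
    have h2 : (∫ s in (0:ℝ)..(0+1), (g s - gbar)) = 0 := by
      rw [zero_add, intervalIntegral.integral_sub (hg.intervalIntegrable _ _)
        intervalIntegrable_const]
      simp [hgbar]
    have h3 : G t + ∫ s in t..(t+1), (g s - gbar) = G (t+1) :=
      intervalIntegral.integral_add_adjacent_intervals (hgc.intervalIntegrable _ _)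
        (hgc.intervalIntegrable _ _)
    rw [← h3, h1, h2, add_zero]
  have hG1 : G 1 = 0 := by
    have := hGper 0
    rw [zero_add, hG0] at this
    exact this
  -- finite measure instances
  haveI hfin1 : IsFiniteMeasure (volume.restrict (Ioc (0:ℝ) 1)) := by
    constructor
    rw [Measure.restrict_apply_univ]
    simp [Real.volume_Ioc]
  haveI hfin2 : IsFiniteMeasure (volume.restrict Ω) := by
    constructor
    rw [Measure.restrict_apply_univ]
    exact lt_of_le_of_lt (measure_mono subset_closure) hclcomp.measure_lt_top
  -- it suffices to prove the inequality in one direction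
  suffices hle : ∀ τ₁ ∈ Ioi (0:ℝ), ∀ τ₂ ∈ Ioi (0:ℝ),
      lambdaP Ω (Mop Ω J τ₁ μ b) ≤ lambdaP Ω (Mop Ω J τ₂ μ b) by
    exact fun τ₁ h1 τ₂ h2 => le_antisymm (hle τ₁ h1 τ₂ h2) (hle τ₂ h2 τ₁ h1)
  intro τ₁ hτ₁' τ₂ hτ₂'
  rw [mem_Ioi] at hτ₁' hτ₂'
  have hτ₁ : (0:ℝ) < τ₁ := hτ₁'
  have hτ₂ : (0:ℝ) < τ₂ := hτ₂'
  obtain ⟨φ, hφchi, hφpos, hφeq⟩ := hpe τ₁ (mem_Ioi.mpr hτ₁)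
  obtain ⟨hφx, hφt, hφper⟩ := hφchi
  set lam : ℝ := lambdaP Ω (Mop Ω J τ₁ μ b) with hlam
  -- the eigen-equation, rearranged
  have hφderiv : ∀ x ∈ closure Ω, ∀ t, τ₁ * deriv (φ x) t =
      μ * (∫ y in Ω, J (x - y) * φ y t) + (b x t + lam) * φ x t := by
    intro x hx t
    have h := hφeq x hx t
    unfold Mop at h
    linear_combination -h
  have hKnn : ∀ x ∈ closure Ω, ∀ t, 0 ≤ ∫ y in Ω, J (x - y) * φ y t := fun x hx t =>
    setIntegral_nonneg hΩm fun y hy => mul_nonneg (hJnn _) (hφpos y (subset_closure hy) t).le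
  -- a bound for b + lam on the compact set
  have hbK : ∃ Cb : ℝ, 0 ≤ Cb ∧ ∀ x ∈ closure Ω, ∀ t ∈ Icc (0:ℝ) 1, |b x t + lam| ≤ Cb := by
    obtain ⟨C, hC⟩ := (hclcomp.prod isCompact_Icc).exists_bound_of_continuousOn
      ((hb.1.mono (prod_mono_right (subset_univ _))).add continuousOn_const :
        ContinuousOn (fun p : Euc N × ℝ => b p.1 p.2 + lam) (closure Ω ×ˢ Icc 0 1))
    refine ⟨max C 0, le_max_right _ _, fun x hx t ht => ?_⟩
    have := hC (x, t) ⟨hx, ht⟩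
    rw [Real.norm_eq_abs] at this
    exact this.trans (le_max_left _ _)
  obtain ⟨Cb, hCb0, hCb⟩ := hbK
  -- bound for φ on closure Ω × [0,1]
  have hφbd' : ∀ x ∈ closure Ω, ∀ t ∈ Icc (0:ℝ) 1, φ x t ≤ φ x 1 * Real.exp (Cb / τ₁) := by
    intro x hx t ht
    set h : ℝ → ℝ := fun s => φ x s * Real.exp (Cb * s / τ₁) with hh
    have hd : ∀ s, HasDerivAt h
        (deriv (φ x) s * Real.exp (Cb * s / τ₁) +
          φ x s * (Real.exp (Cb * s / τ₁) * (Cb / τ₁))) s := by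
      intro s
      have h1 : HasDerivAt (φ x) (deriv (φ x) s) s :=
        (((hφt x hx).differentiable one_ne_zero) s).hasDerivAt
      have h2 : HasDerivAt (fun s : ℝ => Cb * s / τ₁) (Cb / τ₁) s := by
        simpa using ((hasDerivAt_id s).const_mul Cb).div_const τ₁
      exact h1.mul h2.exp
    have hmono : MonotoneOn h (Icc (0:ℝ) 1) := by
      apply monotoneOn_of_deriv_nonneg (convex_Icc 0 1)
        (fun s _ => (hd s).continuousAt.continuousWithinAt)
        (fun s _ => (hd s).differentiableAt.differentiableWithinAt)
      intro s hs
      rw [interior_Icc] at hs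
      have hsIcc : s ∈ Icc (0:ℝ) 1 := Ioo_subset_Icc_self hs
      rw [(hd s).deriv]
      have hb1 : -Cb ≤ b x s + lam := (abs_le.mp (hCb x hx s hsIcc)).1
      have hτd := hφderiv x hx s
      have hK := hKnn x hx s
      have hφp := hφpos x hx s
      have hE : (0:ℝ) < Real.exp (Cb * s / τ₁) := Real.exp_pos _
      have key : 0 ≤ τ₁ * (deriv (φ x) s * Real.exp (Cb * s / τ₁) +
          φ x s * (Real.exp (Cb * s / τ₁) * (Cb / τ₁))) := by
        have e1 : τ₁ * (deriv (φ x) s * Real.exp (Cb * s / τ₁) +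
            φ x s * (Real.exp (Cb * s / τ₁) * (Cb / τ₁))) =
            (τ₁ * deriv (φ x) s) * Real.exp (Cb * s / τ₁) +
              Cb * (φ x s * Real.exp (Cb * s / τ₁)) := by
          field_simp
        rw [e1, hτd]
        have h3 : 0 ≤ (b x s + lam + Cb) * (φ x s * Real.exp (Cb * s / τ₁)) :=
          mul_nonneg (by linarith) (by positivity)
        nlinarith [mul_nonneg (mul_nonneg hμ.le hK) hE.le]
      exact nonneg_of_mul_nonneg_right key hτ₁
    have h1 : h t ≤ h 1 := hmono ht (right_mem_Icc.mpr zero_le_one) ht.2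
    have h2 : φ x t ≤ h t := by
      rw [hh]
      have : (1:ℝ) ≤ Real.exp (Cb * t / τ₁) :=
        Real.one_le_exp (div_nonneg (mul_nonneg hCb0 ht.1) hτ₁.le)
      nlinarith [hφpos x hx t]
    have h3 : h 1 = φ x 1 * Real.exp (Cb / τ₁) := by rw [hh]; simp
    linarith [h1, h2, h3.symm.le]
  obtain ⟨M1, hM1⟩ := hclcomp.exists_bound_of_continuousOn (hφx 1)
  set B : ℝ := M1 * Real.exp (Cb / τ₁) with hB
  have hφB : ∀ x ∈ closure Ω, ∀ t ∈ Icc (0:ℝ) 1, φ x t ≤ B := by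
    intro x hx t ht
    refine (hφbd' x hx t ht).trans ?_
    have : φ x 1 ≤ M1 := by
      have := hM1 x hx
      rw [Real.norm_eq_abs] at this
      exact (le_abs_self _).trans this
    exact mul_le_mul_of_nonneg_right this (Real.exp_pos _).le
  have hB0 : 0 < B := by
    obtain ⟨x₀, hx₀⟩ := hne
    exact lt_of_lt_of_le (hφpos x₀ (subset_closure hx₀) 0)
      (hφB x₀ (subset_closure hx₀) 0 ⟨le_rfl, zero_le_one⟩)
  obtain ⟨MG, hMG⟩ := isCompact_Icc.exists_bound_of_continuousOn
    (hGc.continuousOn : ContinuousOn G (Icc (0:ℝ) 1))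
  -- the function w and its properties
  set w : Euc N → ℝ → ℝ := fun x t => φ x t * Real.exp (-G t / τ₁) with hw
  have hecont : Continuous fun t => Real.exp (-G t / τ₁) :=
    Real.continuous_exp.comp (hGc.neg.div_const τ₁)
  have hwcont : ∀ x ∈ closure Ω, Continuous (w x) := fun x hx =>
    ((hφt x hx).continuous).mul hecont
  have hwxcont : ∀ t, ContinuousOn (fun x => w x t) (closure Ω) := fun t =>
    (hφx t).mul continuousOn_const
  have hwpos : ∀ x ∈ closure Ω, ∀ t, 0 < w x t := fun x hx t =>
    mul_pos (hφpos x hx t) (Real.exp_pos _)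
  set Bw : ℝ := B * Real.exp (MG / τ₁) with hBw
  have hwB : ∀ x ∈ closure Ω, ∀ t ∈ Icc (0:ℝ) 1, w x t ≤ Bw := by
    intro x hx t ht
    have h1 : φ x t ≤ B := hφB x hx t ht
    have h2 : Real.exp (-G t / τ₁) ≤ Real.exp (MG / τ₁) := by
      apply Real.exp_le_exp.mpr
      have hGle : -G t ≤ MG := by
        have := hMG t ht
        rw [Real.norm_eq_abs] at this
        linarith [neg_abs_le (G t)]
      gcongr
    calc w x t = φ x t * Real.exp (-G t / τ₁) := rfl
      _ ≤ B * Real.exp (MG / τ₁) :=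
        mul_le_mul h1 h2 (Real.exp_pos _).le hB0.le
  have hw10 : ∀ x, w x 1 = w x 0 := by
    intro x
    have hφ10 : φ x 1 = φ x 0 := by simpa using hφper x 0
    rw [hw]
    simp only [hφ10, hG0, hG1]
  -- ψ, the time average of w
  set ψ : Euc N → ℝ := fun x => ∫ t in (0:ℝ)..1, w x t with hψ
  have hψpos : ∀ x ∈ closure Ω, 0 < ψ x := fun x hx =>
    intervalIntegral.intervalIntegral_pos_of_pos ((hwcont x hx).intervalIntegrable _ _)
      (hwpos x hx) zero_lt_one
  have hψIoc : ∀ x, ψ x = ∫ t in Ioc (0:ℝ) 1, w x t := fun x =>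
    intervalIntegral.integral_of_le zero_le_one
  have hψc : ContinuousOn ψ (closure Ω) := by
    intro x₀ hx₀
    have key : Tendsto (fun x => ∫ t in Ioc (0:ℝ) 1, w x t) (𝓝[closure Ω] x₀)
        (𝓝 (∫ t in Ioc (0:ℝ) 1, w x₀ t)) := by
      apply tendsto_integral_filter_of_dominated_convergence (fun _ => Bw)
      · filter_upwards [eventually_mem_nhdsWithin] with x hx
        exact ((hwcont x hx).aestronglyMeasurable)
      · filter_upwards [eventually_mem_nhdsWithin] with x hx
        refine (ae_restrict_iff' measurableSet_Ioc).mpr (ae_of_all _ fun t ht => ?_)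
        rw [Real.norm_eq_abs, abs_of_pos (hwpos x hx t)]
        exact hwB x hx t (Ioc_subset_Icc_self ht)
      · exact integrable_const _
      · refine ae_of_all _ fun t => ?_
        exact (hwxcont t x₀ hx₀ : ContinuousWithinAt _ _ _)
    rw [ContinuousWithinAt, hψIoc x₀]
    exact key.congr fun x => (hψIoc x).symm
  -- the key claim: ψ solves the elliptic equation
  have hclaim : ∀ x ∈ closure Ω,
      μ * (∫ y in Ω, J (x - y) * ψ y) + (bhat x + gbar + lam) * ψ x = 0 := by
    intro x hx
    set c : ℝ := bhat x + gbar + lam with hc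
    set e : ℝ → ℝ := fun t => Real.exp (-G t / τ₁) with he
    have hwd : ∀ t, HasDerivAt (w x)
        (deriv (φ x) t * e t + φ x t * (e t * (-(g t - gbar) / τ₁))) t := by
      intro t
      have h1 : HasDerivAt (φ x) (deriv (φ x) t) t :=
        (((hφt x hx).differentiable one_ne_zero) t).hasDerivAt
      have h2 : HasDerivAt (fun t : ℝ => -G t / τ₁) (-(g t - gbar) / τ₁) t :=
        ((hGd t).neg).div_const τ₁
      exact h1.mul h2.exp
    set Dw : ℝ → ℝ := fun t =>
      deriv (φ x) t * e t + φ x t * (e t * (-(g t - gbar) / τ₁)) with hDw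
    have hφderc : Continuous (deriv (φ x)) := (hφt x hx).continuous_deriv le_rfl
    have hDwc : Continuous Dw := by
      apply Continuous.add (hφderc.mul hecont)
      exact ((hφt x hx).continuous).mul
        (hecont.mul ((hgc.neg).div_const τ₁))
    -- the pointwise identity
    have hpt : ∀ t, μ * ((∫ y in Ω, J (x - y) * φ y t) * e t) + c * w x t = τ₁ * Dw t := by
      intro t
      have h0 := hφderiv x hx t
      have hbd := hdec x hx t
      have hcan : τ₁ * Dw t =
          τ₁ * (deriv (φ x) t * e t) - φ x t * e t * (g t - gbar) := by
        rw [hDw]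
        field_simp
        ring
      rw [hcan]
      have hwx : w x t = φ x t * e t := rfl
      rw [hwx, hc]
      linear_combination (-e t) * h0 - (φ x t * e t) * hbd
    -- integrate the identity over one period
    have hIDw : (∫ t in (0:ℝ)..1, Dw t) = w x 1 - w x 0 :=
      intervalIntegral.integral_eq_sub_of_hasDerivAt (fun t _ => hwd t)
        (hDwc.intervalIntegrable _ _)
    set q : ℝ → ℝ := fun t => (∫ y in Ω, J (x - y) * φ y t) * e t with hq
    have hqc : Continuous q := by
      have hqeq : q = fun t => (τ₁ * Dw t - c * w x t) / μ := by
        funext t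
        have h := hpt t
        show (∫ y in Ω, J (x - y) * φ y t) * e t = (τ₁ * Dw t - c * w x t) / μ
        field_simp
        linarith
      rw [hqeq]
      exact (((continuous_const.mul hDwc).sub
        (continuous_const.mul (hwcont x hx))).div_const μ)
    have hsplit : μ * (∫ t in (0:ℝ)..1, q t) + c * ψ x = τ₁ * ∫ t in (0:ℝ)..1, Dw t := by
      have h1 : (∫ t in (0:ℝ)..1, (μ * q t + c * w x t)) = ∫ t in (0:ℝ)..1, τ₁ * Dw t :=
        intervalIntegral.integral_congr fun t _ => hpt t
      rw [intervalIntegral.integral_add (f := fun t => μ * q t) (g := fun t => c * w x t) ((continuous_const.mul hqc).intervalIntegrable _ _)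
        ((continuous_const.mul (hwcont x hx)).intervalIntegrable _ _),
        intervalIntegral.integral_const_mul, intervalIntegral.integral_const_mul,
        intervalIntegral.integral_const_mul] at h1
      exact h1
    have hzero : μ * (∫ t in (0:ℝ)..1, q t) + c * ψ x = 0 := by
      rw [hsplit, hIDw, hw10 x]
      ring
    -- Fubini
    set wex : ℝ → Euc N → ℝ := fun t y => if y ∈ closure Ω then w y t else 0 with hwex
    have hwexm : Measurable (Function.uncurry wex) := by
      apply measurable_uncurry_of_continuous_of_measurable
      · intro y
        by_cases hy : y ∈ closure Ω
        · simpa [hwex, hy] using hwcont y hy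
        · simp only [hwex, hy, if_false]
          exact continuous_const
      · intro t
        have hpw : wex t = (closure Ω).piecewise (fun y => w y t) (fun _ => 0) := by
          funext y
          by_cases hy : y ∈ closure Ω <;> simp [hwex, hy, Set.piecewise]
        rw [hpw]
        exact ContinuousOn.measurable_piecewise (hwxcont t) continuousOn_const hclm
    set f : ℝ → Euc N → ℝ := fun t y => J (x - y) * wex t y with hf
    have hfm : Measurable (Function.uncurry f) := by
      have : Function.uncurry f =
          fun p : ℝ × Euc N => J (x - p.2) * Function.uncurry wex p := rfl
      rw [this]
      exact ((hJc.comp (continuous_const.sub continuous_snd)).measurable).mul hwexm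
    have hfint : Integrable (Function.uncurry f)
        ((volume.restrict (Ioc (0:ℝ) 1)).prod (volume.restrict Ω)) := by
      constructor
      · exact hfm.aestronglyMeasurable
      · apply HasFiniteIntegral.of_bounded (C := MJ * Bw)
        rw [Measure.prod_restrict]
        refine (ae_restrict_iff' (measurableSet_Ioc.prod hΩm)).mpr (ae_of_all _ ?_)
        rintro ⟨t, y⟩ ⟨ht, hy⟩
        have hycl : y ∈ closure Ω := subset_closure hy
        have huf : Function.uncurry f (t, y) = J (x - y) * w y t := by
          simp [hf, hwex, Function.uncurry, hycl]
        rw [huf, Real.norm_eq_abs, abs_mul]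
        have h2 : |w y t| ≤ Bw := by
          rw [abs_of_pos (hwpos y hycl t)]
          exact hwB y hycl t (Ioc_subset_Icc_self ht)
        exact mul_le_mul (hMJb _) h2 (abs_nonneg _) hMJ0
    have hswap : (∫ t in Ioc (0:ℝ) 1, ∫ y in Ω, f t y) = ∫ y in Ω, ∫ t in Ioc (0:ℝ) 1, f t y :=
      integral_integral_swap hfint
    have hq2 : ∀ t, q t = ∫ y in Ω, f t y := by
      intro t
      show (∫ y in Ω, J (x - y) * φ y t) * e t = ∫ y in Ω, f t y
      rw [← integral_mul_const]
      apply setIntegral_congr_fun hΩm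
      intro y hy
      have hycl : y ∈ closure Ω := subset_closure hy
      show J (x - y) * φ y t * e t = f t y
      simp only [hf, hwex, if_pos hycl, hw]
      ring
    have hinner : ∀ y ∈ Ω, (∫ t in Ioc (0:ℝ) 1, f t y) = J (x - y) * ψ y := by
      intro y hy
      have hycl : y ∈ closure Ω := subset_closure hy
      have h1 : (fun t => f t y) = fun t => J (x - y) * w y t := by
        funext t
        simp [hf, hwex, hycl]
      rw [h1, integral_const_mul, ← hψIoc y]
    have hfub : (∫ t in (0:ℝ)..1, q t) = ∫ y in Ω, J (x - y) * ψ y := by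
      rw [intervalIntegral.integral_of_le zero_le_one]
      calc (∫ t in Ioc (0:ℝ) 1, q t) = ∫ t in Ioc (0:ℝ) 1, ∫ y in Ω, f t y :=
            integral_congr_ae (ae_of_all _ fun t => hq2 t)
        _ = ∫ y in Ω, ∫ t in Ioc (0:ℝ) 1, f t y := hswap
        _ = ∫ y in Ω, J (x - y) * ψ y := setIntegral_congr_fun hΩm fun y hy => hinner y hy
    rw [← hfub]
    exact hzero
  -- construct the test function for τ₂ and conclude
  have hmem : lam ∈ {l : ℝ | ∃ v, memChi Ω v ∧ posOn Ω v ∧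
      ∀ x ∈ closure Ω, ∀ t : ℝ, Mop Ω J τ₂ μ b v x t + l * v x t ≤ 0} := by
    refine ⟨fun x t => ψ x * Real.exp (G t / τ₂), ⟨?_, ?_, ?_⟩, ?_, ?_⟩
    · intro t
      exact hψc.mul continuousOn_const
    · intro x hx
      exact contDiff_const.mul ((hGcd.div_const τ₂).exp)
    · intro x t
      simp [hGper t]
    · intro x hx t
      exact mul_pos (hψpos x hx) (Real.exp_pos _)
    · intro x hx t
      have hdv : deriv (fun t => ψ x * Real.exp (G t / τ₂)) t =
          ψ x * (Real.exp (G t / τ₂) * ((g t - gbar) / τ₂)) :=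
        ((((hGd t).div_const τ₂).exp).const_mul (ψ x)).deriv
      have hIv : (∫ y in Ω, J (x - y) * (ψ y * Real.exp (G t / τ₂))) =
          (∫ y in Ω, J (x - y) * ψ y) * Real.exp (G t / τ₂) := by
        rw [← integral_mul_const]
        simp only [mul_assoc]
      unfold Mop
      rw [hdv, hIv, hdec x hx t]
      have h0 := hclaim x hx
      have hkey : -τ₂ * (ψ x * (Real.exp (G t / τ₂) * ((g t - gbar) / τ₂))) +
          μ * ((∫ y in Ω, J (x - y) * ψ y) * Real.exp (G t / τ₂)) +
          (bhat x + g t) * (ψ x * Real.exp (G t / τ₂)) +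
          lam * (ψ x * Real.exp (G t / τ₂)) =
          Real.exp (G t / τ₂) *
            (μ * (∫ y in Ω, J (x - y) * ψ y) + (bhat x + gbar + lam) * ψ x) := by
        field_simp
        ring
      rw [hkey, h0, mul_zero]
  have hbdd := bddAboveAux Ω hne hΩm J hJnn hτ₂ hμ b hb.1
  exact le_csSup hbdd hmem
end
end

section
/- Under assumptions (J), (H) and (A), the generalised principal eigenvalue satisfies λ_p(L_Ω^{τ,μ,σ,m}) ≤ min_{x ∈ Ω̄} { (μ/σ^m) h^σ(x) − â(x) }. -/
open MeasureTheory Set Filter Topology Bornology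

noncomputable section

section AuxProof

variable {N : ℕ}

/-- Continuity in time of a coefficient satisfying `coeffHyp`, at a fixed `x ∈ closure Ω`. -/
lemma coeff_cont_time {Ω : Set (Euc N)} {a : Euc N → ℝ → ℝ} (ha : coeffHyp Ω a)
    {x : Euc N} (hx : x ∈ closure Ω) : Continuous (fun t => a x t) := by
  rw [← continuousOn_univ]
  have : ContinuousOn (fun t : ℝ => (x, t)) univ := by fun_prop
  exact ha.1.comp this (fun t _ => ⟨hx, mem_univ t⟩)

theorem stmt_6' {N : ℕ} (hN : 1 ≤ N) (Ω : Set (Euc N)) (hΩ : domainHyp Ω)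
    (J : Euc N → ℝ) (hJ : kernelHyp J)
    (τ μ σ m : ℝ) (hτ : 0 < τ) (hμ : 0 < μ) (hσ : 0 < σ) (hm : 0 ≤ m)
    (h : ℝ → Euc N → ℝ)
    (hH1 : ∀ s ∈ Ioi (0:ℝ), ContinuousOn (h s) (closure Ω))
    (hH2 : ∃ M : ℝ, ∀ s ∈ Ioi (0:ℝ), ∀ x ∈ closure Ω, |h s x| ≤ M)
    (a : Euc N → ℝ → ℝ) (ha : coeffHyp Ω a) :
    lambdaP Ω (Lop Ω J τ μ σ m (h σ) a) ≤
      sInf ((fun x => (μ / σ ^ m) * h σ x - ∫ t in (0:ℝ)..1, a x t) '' closure Ω) := by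
  set c : ℝ := μ / σ ^ m with hc_def
  have hc : 0 < c := div_pos hμ (Real.rpow_pos_of_pos hσ m)
  have hΩne : Ω.Nonempty := hΩ.1
  have hΩopen : IsOpen Ω := hΩ.2.1
  have hΩbd : IsBounded Ω := hΩ.2.2.2
  have hclne : (closure Ω).Nonempty := hΩne.closure
  have hclcp : IsCompact (closure Ω) := hΩbd.isCompact_closure
  -- the admissible set
  set S : Set ℝ := {l : ℝ | ∃ v, memChi Ω v ∧ posOn Ω v ∧
    ∀ x ∈ closure Ω, ∀ t : ℝ, Lop Ω J τ μ σ m (h σ) a v x t + l * v x t ≤ 0} with hS_def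
  -- bound on J
  obtain ⟨CJ, hCJball, hCJ0⟩ :
      ∃ CJ : ℝ, (∀ z ∈ Metric.closedBall (0 : Euc N) 1, J z ≤ CJ) ∧ J 0 ≤ CJ := by
    obtain ⟨z0, _, hz0⟩ := (isCompact_closedBall (0 : Euc N) 1).exists_isMaxOn
      ⟨0, Metric.mem_closedBall_self zero_le_one⟩ hJ.1.continuousOn
    exact ⟨J z0, fun z hz => hz0 hz, hz0 (Metric.mem_closedBall_self zero_le_one)⟩
  have hCJpos : 0 < CJ := lt_of_lt_of_le hJ.2.2.2.2.1 hCJ0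
  have hJle : ∀ z : Euc N, J z ≤ CJ := by
    intro z
    by_cases hz : ‖z‖ ≤ 1
    · exact hCJball z (by simpa [Metric.mem_closedBall, dist_eq_norm] using hz)
    · rw [hJ.2.2.2.1 z (not_le.mp hz)]; exact hCJpos.le
  have hJscle : ∀ z : Euc N, Jsc J σ z ≤ (1 / σ ^ N) * CJ := fun z =>
    mul_le_mul_of_nonneg_left (hJle _) (by positivity)
  have hJscnn : ∀ z : Euc N, 0 ≤ Jsc J σ z := fun z =>
    mul_nonneg (by positivity) (hJ.2.1 _)
  -- bound on h
  obtain ⟨M, hM⟩ := hH2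
  have hMσ : ∀ x ∈ closure Ω, |h σ x| ≤ M := hM σ hσ
  -- bound on a
  obtain ⟨Ka, hKa⟩ : ∃ Ka : ℝ, ∀ x ∈ closure Ω, ∀ t : ℝ, a x t ≤ Ka := by
    obtain ⟨C, hC⟩ := (hclcp.prod isCompact_Icc).exists_bound_of_continuousOn
      (ha.1.mono (prod_mono_right (subset_univ (Icc (0:ℝ) 1))))
    refine ⟨C, fun x hx t => ?_⟩
    have hper : Function.Periodic (a x) 1 := ha.2 x
    have : a x t = a x (Int.fract t) := by
      have h1 := hper.sub_int_mul_eq (x := t) ⌊t⌋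
      have h2 : Int.fract t = t - ⌊t⌋ * 1 := by rw [Int.fract]; ring
      rw [h2]; exact h1.symm
    rw [this]
    have hfr : Int.fract t ∈ Icc (0:ℝ) 1 := ⟨Int.fract_nonneg t, (Int.fract_lt_one t).le⟩
    have := hC (x, Int.fract t) ⟨hx, hfr⟩
    exact le_trans (le_abs_self _) (by simpa [Real.norm_eq_abs] using this)
  -- finiteness of the measure of Ω
  have hΩmeas : MeasurableSet Ω := hΩopen.measurableSet
  have hΩfin : volume Ω < ⊤ := hΩbd.measure_lt_top
  -- Part A : S is nonempty
  have hSne : S.Nonempty := by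
    refine ⟨-(c * ((1 / σ ^ N * CJ) * (volume Ω).toReal) + c * M + Ka),
      fun _ _ => (1:ℝ), ⟨fun t => continuousOn_const, fun x _ => contDiff_const,
        fun x t => rfl⟩, fun x _ t => one_pos, fun x hx t => ?_⟩
    have hJsccont : Continuous (fun y : Euc N => Jsc J σ (x - y)) := by
      have hc1 : Continuous (Jsc J σ) := by
        unfold Jsc
        exact continuous_const.mul (hJ.1.comp (continuous_const_smul σ⁻¹))
      exact hc1.comp (continuous_const.sub continuous_id)
    have hI : |∫ y in Ω, Jsc J σ (x - y)| ≤ (1 / σ ^ N * CJ) * (volume Ω).toReal := by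
      have := norm_setIntegral_le_of_norm_le_const (f := fun y => Jsc J σ (x - y)) (C := 1 / σ ^ N * CJ) hΩfin
        (fun y _ => by
          rw [Real.norm_eq_abs, abs_of_nonneg (hJscnn _)]
          exact hJscle _)
      rwa [Real.norm_eq_abs, measureReal_def] at this
    have h1 : -(c * h σ x) ≤ c * M := by
      have : -M ≤ h σ x := neg_le_of_abs_le (hMσ x hx)
      nlinarith
    have h2 : c * (∫ y in Ω, Jsc J σ (x - y)) ≤
        c * ((1 / σ ^ N * CJ) * (volume Ω).toReal) :=
      mul_le_mul_of_nonneg_left (le_trans (le_abs_self _) hI) hc.le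
    have h3 : a x t ≤ Ka := hKa x hx t
    simp only [Lop, deriv_const, mul_one, ← hc_def]
    nlinarith [mul_sub c (∫ y in Ω, Jsc J σ (x - y)) (h σ x)]
  -- Part B : every element of S is bounded by the target at each x
  have key : ∀ l ∈ S, ∀ x ∈ closure Ω, l ≤ c * h σ x - ∫ t in (0:ℝ)..1, a x t := by
    rintro l ⟨v, hvchi, hvpos, hvineq⟩ x hx
    have hvC1 : ContDiff ℝ 1 (v x) := hvchi.2.1 x hx
    have hvdiff : Differentiable ℝ (v x) := hvC1.differentiable one_ne_zero
    have hvcont : Continuous (v x) := hvC1.continuous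
    have hv'cont : Continuous (deriv (v x)) := hvC1.continuous_deriv le_rfl
    have hvposx : ∀ t, 0 < v x t := hvpos x hx
    -- pointwise inequality
    have hpt : ∀ t : ℝ, a x t + l - c * h σ x ≤ τ * (deriv (v x) t / v x t) := by
      intro t
      have hI : 0 ≤ ∫ y in Ω, Jsc J σ (x - y) * v y t :=
        setIntegral_nonneg hΩmeas (fun y hy =>
          mul_nonneg (hJscnn _) (hvpos y (subset_closure hy) t).le)
      have hineq := hvineq x hx t
      simp only [Lop, ← hc_def] at hineq
      have hmul : (a x t + l - c * h σ x) * v x t ≤ τ * deriv (v x) t := by nlinarith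
      rw [← mul_div_assoc, le_div_iff₀ (hvposx t)]
      exact hmul
    -- integrate the inequality over one period
    have hacont : Continuous (fun t => a x t) := coeff_cont_time ha hx
    have hg_int : IntervalIntegrable (fun t => a x t + l - c * h σ x) volume 0 1 := by
      apply Continuous.intervalIntegrable; fun_prop
    have hφcont : Continuous (fun t => τ * (deriv (v x) t / v x t)) := by
      exact continuous_const.mul (hv'cont.div hvcont (fun t => (hvposx t).ne'))
    have hφ_int : IntervalIntegrable (fun t => τ * (deriv (v x) t / v x t)) volume 0 1 :=
      hφcont.intervalIntegrable 0 1
    have hmono := intervalIntegral.integral_mono_on (by norm_num : (0:ℝ) ≤ 1)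
      hg_int hφ_int (fun t _ => hpt t)
    -- the right-hand side integrates to zero
    have hlog : ∀ t ∈ uIcc (0:ℝ) 1,
        HasDerivAt (fun s => Real.log (v x s)) (deriv (v x) t / v x t) t := by
      intro t _
      exact ((hvdiff t).hasDerivAt).log (hvposx t).ne'
    have hdint : IntervalIntegrable (fun t => deriv (v x) t / v x t) volume 0 1 :=
      (hv'cont.div hvcont (fun t => (hvposx t).ne')).intervalIntegrable 0 1
    have hrhs : (∫ t in (0:ℝ)..1, deriv (v x) t / v x t) = 0 := by
      rw [intervalIntegral.integral_eq_sub_of_hasDerivAt hlog hdint]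
      have : v x 1 = v x 0 := by simpa using (hvchi.2.2 x 0)
      rw [this, sub_self]
    have hrhs' : (∫ t in (0:ℝ)..1, τ * (deriv (v x) t / v x t)) = 0 := by
      rw [intervalIntegral.integral_const_mul, hrhs, mul_zero]
    -- the left-hand side
    have hlhs : (∫ t in (0:ℝ)..1, (a x t + l - c * h σ x)) =
        (∫ t in (0:ℝ)..1, a x t) + (l - c * h σ x) := by
      have h1 : IntervalIntegrable (fun t => a x t) volume 0 1 :=
        hacont.intervalIntegrable 0 1
      have h2 : IntervalIntegrable (fun _ : ℝ => l - c * h σ x) volume 0 1 :=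
        intervalIntegrable_const
      have : (∫ t in (0:ℝ)..1, (a x t + (l - c * h σ x))) =
          (∫ t in (0:ℝ)..1, a x t) + ∫ t in (0:ℝ)..1, (l - c * h σ x) :=
        intervalIntegral.integral_add h1 h2
      simpa [add_sub_assoc] using this
    rw [hlhs, hrhs'] at hmono
    linarith
  -- conclude
  rw [lambdaP, ← hS_def]
  apply csSup_le hSne
  intro l hl
  apply le_csInf (hclne.image _)
  rintro b ⟨x, hx, rfl⟩
  exact key l hl x hx

end AuxProof

/-- Upper bound: `λ_p(L_Ω^{τ,μ,σ,m}) ≤ min_{x∈Ω̄} { (μ/σ^m) h^σ(x) − â(x) }`. -/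
theorem stmt_6 {N : ℕ} (hN : 1 ≤ N) (Ω : Set (Euc N)) (hΩ : domainHyp Ω)
    (J : Euc N → ℝ) (hJ : kernelHyp J)
    (τ μ σ m : ℝ) (hτ : 0 < τ) (hμ : 0 < μ) (hσ : 0 < σ) (hm : 0 ≤ m)
    (h : ℝ → Euc N → ℝ)
    (hH1 : ∀ s ∈ Ioi (0:ℝ), ContinuousOn (h s) (closure Ω))
    (hH2 : ∃ M : ℝ, ∀ s ∈ Ioi (0:ℝ), ∀ x ∈ closure Ω, |h s x| ≤ M)
    (a : Euc N → ℝ → ℝ) (ha : coeffHyp Ω a) :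
    lambdaP Ω (Lop Ω J τ μ σ m (h σ) a) ≤
      sInf ((fun x => (μ / σ ^ m) * h σ x - ∫ t in (0:ℝ)..1, a x t) '' closure Ω) := by
  exact stmt_6' hN Ω hΩ J hJ τ μ σ m hτ hμ hσ hm h hH1 hH2 a ha
end
end

section
/- Fix τ > 0, σ = 1 and m = 0. Then the function μ ↦ λ_p(L_Ω^{τ,μ,1,0}) is continuous on (0,∞), and lim_{μ→0⁺} λ_p(L_Ω^{τ,μ,1,0}) = −max_{x ∈ Ω̄} â(x). -/
open MeasureTheory Set Filter Topology Bornology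

noncomputable section

section Stmt7Aux

open MeasureTheory Set Filter Topology Bornology

variable {N : ℕ} (Ω : Set (Euc N)) (J : Euc N → ℝ) (τ : ℝ) (h1 : Euc N → ℝ) (a : Euc N → ℝ → ℝ)

/-- The admissible set defining `lambdaP` for our operator. -/
def Sset (μ : ℝ) : Set ℝ := {l : ℝ | ∃ v, memChi Ω v ∧ posOn Ω v ∧
    ∀ x ∈ closure Ω, ∀ t : ℝ, Lop Ω J τ μ 1 0 h1 a v x t + l * v x t ≤ 0}

lemma lambdaP_eq_sSup (μ : ℝ) :
    lambdaP Ω (Lop Ω J τ μ 1 0 h1 a) = sSup (Sset Ω J τ h1 a μ) := rfl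

lemma Lop_eq (μ : ℝ) (v : Euc N → ℝ → ℝ) (x : Euc N) (t : ℝ) :
    Lop Ω J τ μ 1 0 h1 a v x t =
      -τ * deriv (v x) t + μ * ((∫ y in Ω, J (x - y) * v y t) - h1 x * v x t)
        + a x t * v x t := by
  simp [Lop, Jsc, Real.rpow_zero]

variable {Ω a}

lemma cont_a_slice (ha : ContinuousOn (fun p : Euc N × ℝ => a p.1 p.2) (closure Ω ×ˢ univ))
    {x : Euc N} (hx : x ∈ closure Ω) : Continuous fun t => a x t := by
  have h1 : Continuous (fun t : ℝ => ((x, t) : Euc N × ℝ)) := continuous_const.prodMk continuous_id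
  exact ha.comp_continuous h1 (fun t => ⟨hx, mem_univ t⟩)

variable {J}

lemma integ_nonneg (hJnn : ∀ z, 0 ≤ J z) (hΩo : IsOpen Ω) {v : Euc N → ℝ → ℝ}
    (hpos : posOn Ω v) (x : Euc N) (t : ℝ) :
    0 ≤ ∫ y in Ω, J (x - y) * v y t :=
  setIntegral_nonneg hΩo.measurableSet fun y hy =>
    mul_nonneg (hJnn _) (hpos y (subset_closure hy) t).le

variable {τ h1}

/-- Upper bound: any admissible `l` satisfies `l + â x₀ ≤ μ h(x₀)`. -/
lemma Sset_upper (hΩo : IsOpen Ω) (hJnn : ∀ z, 0 ≤ J z) (hτ : 0 < τ)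
    {μ l : ℝ} (hμ : 0 ≤ μ) (hl : l ∈ Sset Ω J τ h1 a μ) {x₀ : Euc N} (hx₀ : x₀ ∈ closure Ω)
    (ha : ContinuousOn (fun p : Euc N × ℝ => a p.1 p.2) (closure Ω ×ˢ univ)) :
    l + (∫ t in (0:ℝ)..1, a x₀ t) ≤ μ * h1 x₀ := by
  obtain ⟨v, hchi, hpos, hineq⟩ := hl
  set w : ℝ → ℝ := v x₀ with hw_def
  have hw : ContDiff ℝ 1 w := hchi.2.1 x₀ hx₀
  have hwpos : ∀ t, 0 < w t := fun t => hpos x₀ hx₀ t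
  have hwd : Differentiable ℝ w := hw.differentiable one_ne_zero
  have hw' : Continuous (deriv w) := (contDiff_one_iff_deriv.mp hw).2
  have hwc : Continuous w := hwd.continuous
  have hac : Continuous fun t => a x₀ t := cont_a_slice ha hx₀
  have key : ∀ t, a x₀ t + (l - μ * h1 x₀) ≤ τ * (deriv w t / w t) := by
    intro t
    have h0 := hineq x₀ hx₀ t
    rw [Lop_eq] at h0
    have hint : 0 ≤ ∫ y in Ω, J (x₀ - y) * v y t := integ_nonneg hJnn hΩo hpos x₀ t
    have h2 : (a x₀ t + (l - μ * h1 x₀)) * w t ≤ τ * deriv w t := by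
      have hμI : 0 ≤ μ * ∫ y in Ω, J (x₀ - y) * v y t := mul_nonneg hμ hint
      nlinarith [hμI]
    rw [mul_div_assoc'] -- τ * (d / w) = τ * d / w
    exact (le_div_iff₀ (hwpos t)).mpr h2
  -- integrate over [0,1]
  have hdq : Continuous fun t => deriv w t / w t :=
    hw'.div hwc fun t => (hwpos t).ne'
  have hlhs : IntervalIntegrable (fun t => a x₀ t + (l - μ * h1 x₀)) volume 0 1 :=
    (hac.add continuous_const).intervalIntegrable 0 1
  have hrhs : IntervalIntegrable (fun t => τ * (deriv w t / w t)) volume 0 1 :=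
    (continuous_const.mul hdq).intervalIntegrable 0 1
  have hmono := intervalIntegral.integral_mono_on (by norm_num : (0:ℝ) ≤ 1) hlhs hrhs
    (fun t _ => key t)
  have hlog : ∀ t : ℝ, HasDerivAt (fun s => Real.log (w s)) (deriv w t / w t) t :=
    fun t => ((hwd t).hasDerivAt).log (hwpos t).ne'
  have hInt_log : (∫ t in (0:ℝ)..1, deriv w t / w t)
      = Real.log (w 1) - Real.log (w 0) :=
    intervalIntegral.integral_eq_sub_of_hasDerivAt (fun t _ => hlog t)
      (hdq.intervalIntegrable 0 1)
  have hw10 : w 1 = w 0 := by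
    have := hchi.2.2 x₀ 0
    simpa using this
  rw [intervalIntegral.integral_add (hac.intervalIntegrable 0 1)
      (intervalIntegrable_const), intervalIntegral.integral_const,
      intervalIntegral.integral_const_mul, hInt_log, hw10] at hmono
  simp at hmono
  linarith

end Stmt7Aux
section Stmt7Aux2

open MeasureTheory Set Filter Topology Bornology

variable {N : ℕ} {Ω : Set (Euc N)} {J : Euc N → ℝ} {τ : ℝ} {h1 : Euc N → ℝ} {a : Euc N → ℝ → ℝ}

lemma amgm_aux {c₁ c₂ A B : ℝ} (hc₁ : 0 ≤ c₁) (hc₂ : 0 ≤ c₂) (hA : 0 ≤ A) (hB : 0 ≤ B) :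
    2 * Real.sqrt (c₁*c₂) * Real.sqrt (A*B) ≤ c₁*A + c₂*B := by
  have e1 : Real.sqrt (c₁*c₂) * Real.sqrt (A*B) = Real.sqrt (c₁*A) * Real.sqrt (c₂*B) := by
    rw [← Real.sqrt_mul (by positivity), ← Real.sqrt_mul (by positivity)]
    ring_nf
  have h1 : Real.sqrt (c₁*A) ^ 2 = c₁*A := Real.sq_sqrt (by positivity)
  have h2 : Real.sqrt (c₂*B) ^ 2 = c₂*B := Real.sq_sqrt (by positivity)
  nlinarith [sq_nonneg (Real.sqrt (c₁*A) - Real.sqrt (c₂*B))]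

lemma integ_helper (hΩb : IsBounded Ω) (hJc : Continuous J) {F : Euc N → ℝ}
    (hF : ContinuousOn F (closure Ω)) (x : Euc N) :
    IntegrableOn (fun y => J (x - y) * F y) Ω volume := by
  have hK : IsCompact (closure Ω) :=
    Metric.isCompact_of_isClosed_isBounded isClosed_closure hΩb.closure
  have hcont : ContinuousOn (fun y => J (x - y) * F y) (closure Ω) :=
    ((hJc.comp (continuous_const.sub continuous_id)).continuousOn).mul hF
  exact (hcont.integrableOn_compact hK).mono_set subset_closure

/-- Monotone comparison: decreasing `μ` decreases the eigenvalue at most linearly. -/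
lemma Sset_mono (hΩo : IsOpen Ω) (hJnn : ∀ z, 0 ≤ J z)
    {M : ℝ} (hM : ∀ x ∈ closure Ω, |h1 x| ≤ M)
    {μ μ' l : ℝ} (hμ' : μ' ≤ μ) (hl : l ∈ Sset Ω J τ h1 a μ) :
    l - (μ - μ') * M ∈ Sset Ω J τ h1 a μ' := by
  obtain ⟨v, hchi, hpos, hineq⟩ := hl
  refine ⟨v, hchi, hpos, fun x hx t => ?_⟩
  have h0 := hineq x hx t
  rw [Lop_eq] at h0 ⊢
  have hint := integ_nonneg hJnn hΩo hpos x t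
  have hv := hpos x hx t
  have hhx := (abs_le.mp (hM x hx)).2
  have t1 : 0 ≤ (μ - μ') * ∫ y in Ω, J (x - y) * v y t :=
    mul_nonneg (by linarith) hint
  have t2 : 0 ≤ (μ - μ') * ((M - h1 x) * v x t) :=
    mul_nonneg (by linarith) (mul_nonneg (by linarith) hv.le)
  nlinarith [t1, t2]

set_option maxHeartbeats 1000000 in
/-- Geometric-mean combination of admissible pairs. -/
lemma Sset_GM (hΩo : IsOpen Ω) (hΩb : IsBounded Ω) (hJc : Continuous J)
    (hJnn : ∀ z, 0 ≤ J z) (hτ : 0 < τ)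
    {M : ℝ} (hM : ∀ x ∈ closure Ω, |h1 x| ≤ M)
    {μ₁ μ₂ l₁ l₂ : ℝ} (hμ₁ : 0 < μ₁) (hμ₂ : 0 < μ₂)
    (hl₁ : l₁ ∈ Sset Ω J τ h1 a μ₁) (hl₂ : l₂ ∈ Sset Ω J τ h1 a μ₂) :
    (l₁ + l₂)/2 - ((μ₁ + μ₂)/2 - Real.sqrt (μ₁*μ₂)) * M
      ∈ Sset Ω J τ h1 a (Real.sqrt (μ₁*μ₂)) := by
  obtain ⟨v₁, hchi₁, hpos₁, hineq₁⟩ := hl₁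
  obtain ⟨v₂, hchi₂, hpos₂, hineq₂⟩ := hl₂
  set g : ℝ := Real.sqrt (μ₁*μ₂) with hg_def
  have hgpos : 0 < g := Real.sqrt_pos.mpr (mul_pos hμ₁ hμ₂)
  set v : Euc N → ℝ → ℝ := fun x t => Real.sqrt (v₁ x t * v₂ x t) with hv_def
  have hvpos : posOn Ω v := fun x hx t =>
    Real.sqrt_pos.mpr (mul_pos (hpos₁ x hx t) (hpos₂ x hx t))
  -- derivative data
  have hasD : ∀ x ∈ closure Ω, ∀ t : ℝ, HasDerivAt (v x)
      ((deriv (v₁ x) t * v₂ x t + v₁ x t * deriv (v₂ x) t)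
        / (2 * Real.sqrt (v₁ x t * v₂ x t))) t := by
    intro x hx t
    have hd₁ : HasDerivAt (v₁ x) (deriv (v₁ x) t) t :=
      (((hchi₁.2.1 x hx).differentiable one_ne_zero) t).hasDerivAt
    have hd₂ : HasDerivAt (v₂ x) (deriv (v₂ x) t) t :=
      (((hchi₂.2.1 x hx).differentiable one_ne_zero) t).hasDerivAt
    have hprod := hd₁.mul hd₂
    exact hprod.sqrt (mul_pos (hpos₁ x hx t) (hpos₂ x hx t)).ne'
  have hderiv_eq : ∀ x ∈ closure Ω, deriv (v x) = fun t =>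
      (deriv (v₁ x) t * v₂ x t + v₁ x t * deriv (v₂ x) t)
        / (2 * Real.sqrt (v₁ x t * v₂ x t)) := by
    intro x hx; funext t; exact (hasD x hx t).deriv
  have hchi : memChi Ω v := by
    refine ⟨fun t => ?_, fun x hx => ?_, fun x t => ?_⟩
    · exact Real.continuous_sqrt.comp_continuousOn ((hchi₁.1 t).mul (hchi₂.1 t))
    · rw [contDiff_one_iff_deriv]
      constructor
      · exact fun t => ((hasD x hx t).differentiableAt)
      · rw [hderiv_eq x hx]
        have hc₁ : Continuous (v₁ x) := ((hchi₁.2.1 x hx).differentiable one_ne_zero).continuous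
        have hc₂ : Continuous (v₂ x) := ((hchi₂.2.1 x hx).differentiable one_ne_zero).continuous
        have hdc₁ : Continuous (deriv (v₁ x)) := (contDiff_one_iff_deriv.mp (hchi₁.2.1 x hx)).2
        have hdc₂ : Continuous (deriv (v₂ x)) := (contDiff_one_iff_deriv.mp (hchi₂.2.1 x hx)).2
        refine ((hdc₁.mul hc₂).add (hc₁.mul hdc₂)).div
          (continuous_const.mul (Real.continuous_sqrt.comp (hc₁.mul hc₂))) fun t => ?_
        have := Real.sqrt_pos.mpr (mul_pos (hpos₁ x hx t) (hpos₂ x hx t))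
        positivity
    · simp only [hv_def, hchi₁.2.2 x t, hchi₂.2.2 x t]
  refine ⟨v, hchi, hvpos, fun x hx t => ?_⟩
  -- notation
  have H₁ := hineq₁ x hx t
  have H₂ := hineq₂ x hx t
  rw [Lop_eq] at H₁ H₂ ⊢
  set P := v₁ x t with hP_def
  set Q := v₂ x t with hQ_def
  have hP : 0 < P := hpos₁ x hx t
  have hQ : 0 < Q := hpos₂ x hx t
  set V := Real.sqrt (P * Q) with hV_def
  have hV : 0 < V := Real.sqrt_pos.mpr (mul_pos hP hQ)
  have hV2 : V ^ 2 = P * Q := Real.sq_sqrt (mul_pos hP hQ).le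
  set I₁ := ∫ y in Ω, J (x - y) * v₁ y t with hI₁_def
  set I₂ := ∫ y in Ω, J (x - y) * v₂ y t with hI₂_def
  set c₁ := μ₁ * V / (2 * P) with hc₁_def
  set c₂ := μ₂ * V / (2 * Q) with hc₂_def
  have hc₁0 : 0 ≤ c₁ := by positivity
  have hc₂0 : 0 ≤ c₂ := by positivity
  -- the integral inequality
  have hgc : g = 2 * Real.sqrt (c₁ * c₂) := by
    have e2 : c₁ * c₂ = μ₁ * μ₂ * (V^2) / (4 * (P*Q)) := by
      rw [hc₁_def, hc₂_def]; ring
    have e : c₁ * c₂ = (μ₁ * μ₂) / 4 := by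
      rw [e2, hV2, div_eq_div_iff (by positivity) (by norm_num : (4:ℝ) ≠ 0)]
      ring
    rw [e, hg_def, show (μ₁*μ₂)/4 = (μ₁*μ₂) * (1/4) by ring,
      Real.sqrt_mul (mul_pos hμ₁ hμ₂).le (1/4),
      show Real.sqrt (1/4 : ℝ) = 1/2 by
        rw [show (1/4:ℝ) = (1/2)^2 by norm_num]; exact Real.sqrt_sq (by norm_num)]
    ring
  have hIneq : g * (∫ y in Ω, J (x - y) * v y t) ≤ c₁ * I₁ + c₂ * I₂ := by
    have hInt1 : IntegrableOn (fun y => J (x - y) * (v₁ y t)) Ω volume :=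
      integ_helper hΩb hJc (hchi₁.1 t) x
    have hInt2 : IntegrableOn (fun y => J (x - y) * (v₂ y t)) Ω volume :=
      integ_helper hΩb hJc (hchi₂.1 t) x
    have hdom : IntegrableOn (fun y => c₁ * (J (x - y) * v₁ y t)
        + c₂ * (J (x - y) * v₂ y t)) Ω volume :=
      (hInt1.const_mul c₁).add (hInt2.const_mul c₂)
    have hmono : ∫ y in Ω, g * (J (x - y) * v y t)
        ≤ ∫ y in Ω, (c₁ * (J (x - y) * v₁ y t) + c₂ * (J (x - y) * v₂ y t)) := by
      refine integral_mono_of_nonneg (Eventually.of_forall fun y => ?_) hdom ?_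
      · exact mul_nonneg hgpos.le (mul_nonneg (hJnn _) (Real.sqrt_nonneg _))
      · rw [EventuallyLE, ae_restrict_iff' hΩo.measurableSet]
        refine Eventually.of_forall fun y hy => ?_
        have hb₁ := (hpos₁ y (subset_closure hy) t).le
        have hb₂ := (hpos₂ y (subset_closure hy) t).le
        have key := amgm_aux hc₁0 hc₂0 hb₁ hb₂
        have hJy := hJnn (x - y)
        calc g * (J (x - y) * v y t)
            = J (x - y) * (2 * Real.sqrt (c₁*c₂) * Real.sqrt (v₁ y t * v₂ y t)) := by
              rw [hgc]; ring
          _ ≤ J (x - y) * (c₁ * v₁ y t + c₂ * v₂ y t) :=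
              mul_le_mul_of_nonneg_left key hJy
          _ = c₁ * (J (x - y) * v₁ y t) + c₂ * (J (x - y) * v₂ y t) := by ring
    rw [integral_const_mul] at hmono
    rwa [integral_add (hInt1.const_mul c₁) (hInt2.const_mul c₂),
      integral_const_mul, integral_const_mul] at hmono
  -- scaled test-function inequalities
  set d₁ := deriv (v₁ x) t with hd₁_def
  set d₂ := deriv (v₂ x) t with hd₂_def
  have hS₁ : -τ * d₁ + μ₁ * I₁ ≤ (μ₁ * h1 x - a x t - l₁) * P := by linarith only [H₁]
  have hS₂ : -τ * d₂ + μ₂ * I₂ ≤ (μ₂ * h1 x - a x t - l₂) * Q := by linarith only [H₂]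
  have hS₁' := mul_le_mul_of_nonneg_left hS₁ (by positivity : (0:ℝ) ≤ V / (2*P))
  have hS₂' := mul_le_mul_of_nonneg_left hS₂ (by positivity : (0:ℝ) ≤ V / (2*Q))
  -- derivative identity
  have hD : deriv (v x) t = V / (2*P) * d₁ + V / (2*Q) * d₂ := by
    rw [hderiv_eq x hx]
    show (d₁ * Q + P * d₂) / (2 * Real.sqrt (P * Q)) = _
    rw [← hV_def]
    field_simp
    linear_combination (-(Q*d₁ + P*d₂)) * hV2
  -- algebraic assembly
  have hhx := (abs_le.mp (hM x hx)).2
  have hamgm : g ≤ (μ₁ + μ₂)/2 := by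
    have hh := amgm_aux (zero_le_one) (zero_le_one) hμ₁.le hμ₂.le
    rw [one_mul, Real.sqrt_one] at hh
    rw [hg_def]; linarith
  have hvxt : v x t = V := rfl
  rw [hvxt, hD]
  have k₁ : -τ * (V/(2*P) * d₁) + c₁ * I₁ ≤ (μ₁ * h1 x - a x t - l₁) * V / 2 := by
    calc -τ * (V/(2*P) * d₁) + c₁ * I₁ = V/(2*P) * (-τ*d₁ + μ₁*I₁) := by
          rw [hc₁_def]; ring
      _ ≤ V/(2*P) * ((μ₁*h1 x - a x t - l₁)*P) := hS₁'
      _ = (μ₁ * h1 x - a x t - l₁) * V / 2 := by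
          field_simp
  have k₂ : -τ * (V/(2*Q) * d₂) + c₂ * I₂ ≤ (μ₂ * h1 x - a x t - l₂) * V / 2 := by
    calc -τ * (V/(2*Q) * d₂) + c₂ * I₂ = V/(2*Q) * (-τ*d₂ + μ₂*I₂) := by
          rw [hc₂_def]; ring
      _ ≤ V/(2*Q) * ((μ₂*h1 x - a x t - l₂)*Q) := hS₂'
      _ = (μ₂ * h1 x - a x t - l₂) * V / 2 := by
          field_simp
  have hfin : ((μ₁+μ₂)/2 - g) * (h1 x) * V ≤ ((μ₁+μ₂)/2 - g) * M * V := by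
    have h5 := mul_le_mul_of_nonneg_left hhx (by linarith : (0:ℝ) ≤ (μ₁+μ₂)/2 - g)
    exact mul_le_mul_of_nonneg_right h5 hV.le
  nlinarith [k₁, k₂, hIneq, hfin, hV.le]

end Stmt7Aux2
section Stmt7Aux3

open MeasureTheory Set Filter Topology Bornology

variable {N : ℕ} {Ω : Set (Euc N)} {J : Euc N → ℝ} {τ : ℝ} {h1 : Euc N → ℝ} {a : Euc N → ℝ → ℝ}

lemma J_integrable (hJc : Continuous J) (hJsupp : ∀ z : Euc N, 1 < ‖z‖ → J z = 0) :
    Integrable J (volume : Measure (Euc N)) := by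
  apply hJc.integrable_of_hasCompactSupport
  apply HasCompactSupport.intro (isCompact_closedBall (0 : Euc N) 1)
  intro z hz
  refine hJsupp z ?_
  have : ¬ dist z 0 ≤ 1 := fun hc => hz (Metric.mem_closedBall.mpr hc)
  rw [dist_zero_right] at this
  linarith [not_le.mp this]

/-- Continuity in the parameter of `x ↦ ∫₀ᵗ a(x,s) ds` on `closure Ω`. -/
lemma cont_param_integral (hΩb : IsBounded Ω)
    (ha : ContinuousOn (fun p : Euc N × ℝ => a p.1 p.2) (closure Ω ×ˢ univ))
    {Ma : ℝ} (hMa : ∀ x ∈ closure Ω, ∀ t : ℝ, |a x t| ≤ Ma) (t : ℝ) :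
    ContinuousOn (fun x => ∫ s in (0:ℝ)..t, a x s) (closure Ω) := by
  rw [continuousOn_iff_continuous_restrict]
  apply intervalIntegral.continuous_of_dominated_interval (bound := fun _ => Ma)
  · exact fun x => ((cont_a_slice ha x.2).aestronglyMeasurable).restrict
  · intro x
    exact Eventually.of_forall fun s _ => by
      rw [Real.norm_eq_abs]; exact hMa x.1 x.2 s
  · exact intervalIntegrable_const
  · refine Eventually.of_forall fun s _ => ?_
    exact ha.comp_continuous (continuous_subtype_val.prodMk continuous_const)
      (fun x => ⟨x.2, trivial⟩)

set_option maxHeartbeats 1000000 in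
/-- The explicit lower-bound element of `Sset`. -/
lemma Sset_lower (hΩo : IsOpen Ω) (hΩb : IsBounded Ω) (hJc : Continuous J)
    (hJnn : ∀ z, 0 ≤ J z) (hJsupp : ∀ z : Euc N, 1 < ‖z‖ → J z = 0)
    (hJint : (∫ z, J z) = 1) (hτ : 0 < τ)
    {M Ma SA : ℝ} (hM : ∀ x ∈ closure Ω, |h1 x| ≤ M)
    (hMa : ∀ x ∈ closure Ω, ∀ t : ℝ, |a x t| ≤ Ma)
    (hSA : ∀ x ∈ closure Ω, (∫ s in (0:ℝ)..1, a x s) ≤ SA)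
    (ha : ContinuousOn (fun p : Euc N × ℝ => a p.1 p.2) (closure Ω ×ˢ univ))
    (hap : ∀ (x : Euc N) (t : ℝ), a x (t+1) = a x t)
    {μ : ℝ} (hμ : 0 < μ) :
    -SA - μ * (Real.exp (4*Ma/τ) + M) ∈ Sset Ω J τ h1 a μ := by
  classical
  set Aint : Euc N → ℝ → ℝ := fun x t =>
    if x ∈ closure Ω then (∫ s in (0:ℝ)..t, a x s) - t * (∫ s in (0:ℝ)..1, a x s) else 0
    with hAint_def
  set v : Euc N → ℝ → ℝ := fun x t => Real.exp (Aint x t / τ) with hv_def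
  have hvpos : posOn Ω v := fun x _ t => Real.exp_pos _
  set E : ℝ := Real.exp (2*Ma/τ) with hE_def
  have hEpos : 0 < E := Real.exp_pos _
  -- pointwise formula on the closure
  have hAx : ∀ x ∈ closure Ω, Aint x = fun t =>
      (∫ s in (0:ℝ)..t, a x s) - t * (∫ s in (0:ℝ)..1, a x s) := by
    intro x hx; funext t; simp [hAint_def, hx]
  -- integrability of a x
  have hacont : ∀ x ∈ closure Ω, Continuous (a x) := fun x hx => cont_a_slice ha hx
  -- derivative of Aint x
  have hAderiv : ∀ x ∈ closure Ω, ∀ t : ℝ, HasDerivAt (Aint x)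
      (a x t - (∫ s in (0:ℝ)..1, a x s)) t := by
    intro x hx t
    rw [hAx x hx]
    have hft : HasDerivAt (fun u => ∫ s in (0:ℝ)..u, a x s) (a x t) t := by
      refine intervalIntegral.integral_hasDerivAt_right
        (((hacont x hx)).intervalIntegrable 0 t)
        ⟨univ, Filter.univ_mem, ((hacont x hx).aestronglyMeasurable).restrict⟩
        (hacont x hx).continuousAt
    have hlin : HasDerivAt (fun u : ℝ => u * (∫ s in (0:ℝ)..1, a x s))
        (∫ s in (0:ℝ)..1, a x s) t := by
      simpa using (hasDerivAt_id t).mul_const (∫ s in (0:ℝ)..1, a x s)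
    exact hft.sub hlin
  have hvderiv : ∀ x ∈ closure Ω, ∀ t : ℝ, HasDerivAt (v x)
      (((a x t - (∫ s in (0:ℝ)..1, a x s)) / τ) * v x t) t := by
    intro x hx t
    have := ((hAderiv x hx t).div_const τ).exp
    simpa [hv_def, mul_comm] using this
  -- periodicity
  have hAper : ∀ (x : Euc N), Function.Periodic (Aint x) 1 := by
    intro x t
    by_cases hx : x ∈ closure Ω
    · have hsplit : (∫ s in (0:ℝ)..(t+1), a x s)
          = (∫ s in (0:ℝ)..t, a x s) + ∫ s in t..(t+1), a x s :=
        (intervalIntegral.integral_add_adjacent_intervals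
          ((hacont x hx).intervalIntegrable 0 t)
          ((hacont x hx).intervalIntegrable t (t+1))).symm
      have hper : Function.Periodic (a x) 1 := fun s => hap x s
      have hshift : (∫ s in t..(t+1), a x s) = ∫ s in (0:ℝ)..(0+1), a x s :=
        hper.intervalIntegral_add_eq t 0
      simp only [hAint_def, if_pos hx]
      rw [hsplit, hshift]
      simp; ring
    · simp [hAint_def, hx]
  have hvper : ∀ (x : Euc N) (t : ℝ), v x (t+1) = v x t := by
    intro x t; simp only [hv_def]; rw [hAper x t]
  -- bounds on Aint and v
  have hAbound : ∀ x ∈ closure Ω, ∀ t : ℝ, |Aint x t| ≤ 2*Ma := by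
    intro x hx t
    obtain ⟨s, hs, hst⟩ := (hAper x).exists_mem_Ico₀ one_pos t
    rw [hst, hAx x hx]
    have hMa0 : 0 ≤ Ma := (abs_nonneg _).trans (hMa x hx 0)
    have h1' : |∫ u in (0:ℝ)..s, a x u| ≤ Ma := by
      have := intervalIntegral.norm_integral_le_of_norm_le_const
        (C := Ma) (f := a x) (a := 0) (b := s)
        (fun u _ => by rw [Real.norm_eq_abs]; exact hMa x hx u)
      rw [Real.norm_eq_abs] at this
      calc |∫ u in (0:ℝ)..s, a x u| ≤ Ma * |s - 0| := this
        _ ≤ Ma * 1 := by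
            apply mul_le_mul_of_nonneg_left _ hMa0
            rw [abs_le]; constructor <;> [linarith [hs.1]; linarith [hs.2]]
        _ = Ma := mul_one Ma
    have h2' : |∫ u in (0:ℝ)..1, a x u| ≤ Ma := by
      have := intervalIntegral.norm_integral_le_of_norm_le_const
        (C := Ma) (f := a x) (a := 0) (b := 1)
        (fun u _ => by rw [Real.norm_eq_abs]; exact hMa x hx u)
      rw [Real.norm_eq_abs] at this
      simpa using this
    have hsabs : |s| ≤ 1 := by rw [abs_le]; constructor <;> [linarith [hs.1]; linarith [hs.2]]
    calc |(∫ u in (0:ℝ)..s, a x u) - s * ∫ u in (0:ℝ)..1, a x u|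
        ≤ |∫ u in (0:ℝ)..s, a x u| + |s * ∫ u in (0:ℝ)..1, a x u| := abs_sub _ _
      _ ≤ Ma + 1 * Ma := by
          refine add_le_add h1' ?_
          rw [abs_mul]
          exact mul_le_mul hsabs h2' (abs_nonneg _) zero_le_one
      _ = 2 * Ma := by ring
  have hvup : ∀ x ∈ closure Ω, ∀ t : ℝ, v x t ≤ E := by
    intro x hx t
    rw [hv_def, hE_def]
    apply Real.exp_le_exp.mpr
    have h2 := (abs_le.mp (hAbound x hx t)).2
    gcongr
  have hvlow : ∀ x ∈ closure Ω, ∀ t : ℝ, Real.exp (-(2*Ma)/τ) ≤ v x t := by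
    intro x hx t
    rw [hv_def]
    apply Real.exp_le_exp.mpr
    have h2 := (abs_le.mp (hAbound x hx t)).1
    gcongr
  have hvlowE : ∀ x ∈ closure Ω, ∀ t : ℝ, 1 ≤ E * v x t := by
    intro x hx t
    have h2 := hvlow x hx t
    have hEE : E * Real.exp (-(2*Ma)/τ) = 1 := by
      rw [hE_def, ← Real.exp_add, show 2*Ma/τ + -(2*Ma)/τ = 0 by ring, Real.exp_zero]
    calc (1:ℝ) = E * Real.exp (-(2*Ma)/τ) := hEE.symm
      _ ≤ E * v x t := mul_le_mul_of_nonneg_left h2 hEpos.le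
  -- kernel integral bounds
  have hJx : ∀ x : Euc N, Integrable (fun y => J (x - y)) (volume : Measure (Euc N)) :=
    fun x => (J_integrable hJc hJsupp).comp_sub_left x
  have hJxint : ∀ x : Euc N, (∫ y, J (x - y)) = 1 := fun x => by
    rw [integral_sub_left_eq_self J volume x, hJint]
  have hIvle : ∀ x ∈ closure Ω, ∀ t : ℝ, (∫ y in Ω, J (x - y) * v y t) ≤ E := by
    intro x hx t
    have hstep : (∫ y in Ω, J (x - y) * v y t) ≤ ∫ y in Ω, J (x - y) * E := by
      refine integral_mono_of_nonneg
        (Eventually.of_forall fun y => mul_nonneg (hJnn _) (Real.exp_pos _).le)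
        ((hJx x).mul_const E).integrableOn ?_
      rw [EventuallyLE, ae_restrict_iff' hΩo.measurableSet]
      exact Eventually.of_forall fun y hy =>
        mul_le_mul_of_nonneg_left (hvup y (subset_closure hy) t) (hJnn _)
    have hstep3 : (∫ y in Ω, J (x - y)) ≤ 1 := by
      rw [← hJxint x]
      exact setIntegral_le_integral (hJx x) (Eventually.of_forall fun y => hJnn _)
    calc (∫ y in Ω, J (x - y) * v y t) ≤ ∫ y in Ω, J (x - y) * E := hstep
      _ = (∫ y in Ω, J (x - y)) * E := by rw [integral_mul_const]
      _ ≤ 1 * E := mul_le_mul_of_nonneg_right hstep3 hEpos.le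
      _ = E := one_mul E
  -- membership in χ
  have hchi : memChi Ω v := by
    refine ⟨fun t => ?_, fun x hx => ?_, hvper⟩
    · have hA1 : ContinuousOn
          (fun x => (∫ s in (0:ℝ)..t, a x s) - t * (∫ s in (0:ℝ)..1, a x s)) (closure Ω) :=
        (cont_param_integral hΩb ha hMa t).sub
          (continuousOn_const.mul (cont_param_integral hΩb ha hMa 1))
      have hA : ContinuousOn (fun x => Aint x t) (closure Ω) :=
        hA1.congr (fun x hx => by simp [hAint_def, hx])
      exact Real.continuous_exp.comp_continuousOn (hA.div_const τ)
    · rw [contDiff_one_iff_deriv]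
      refine ⟨fun t => (hvderiv x hx t).differentiableAt, ?_⟩
      have hde : deriv (v x) = fun t =>
          ((a x t - (∫ s in (0:ℝ)..1, a x s)) / τ) * v x t :=
        funext fun t => (hvderiv x hx t).deriv
      rw [hde]
      have hdiff : Differentiable ℝ (v x) := fun t => (hvderiv x hx t).differentiableAt
      have hvc : Continuous (v x) := hdiff.continuous
      exact (((hacont x hx).sub continuous_const).div_const τ).mul hvc
  refine ⟨v, hchi, hvpos, fun x hx t => ?_⟩
  rw [Lop_eq, (hvderiv x hx t).deriv]
  have hvpos' : 0 < v x t := hvpos x hx t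
  have hderivterm : -τ * (((a x t - (∫ s in (0:ℝ)..1, a x s))/τ) * v x t)
      = ((∫ s in (0:ℝ)..1, a x s) - a x t) * v x t := by
    have hτ' : τ ≠ 0 := hτ.ne'
    field_simp
    ring
  rw [hderivterm]
  have c1 : μ * (∫ y in Ω, J (x - y) * v y t) ≤ μ * (Real.exp (4*Ma/τ) * v x t) := by
    have hE1 : (∫ y in Ω, J (x - y) * v y t) ≤ Real.exp (4*Ma/τ) * v x t := by
      have h6 := hvlowE x hx t
      have c2 : E * (E * v x t) = Real.exp (4*Ma/τ) * v x t := by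
        rw [hE_def, ← mul_assoc, ← Real.exp_add]
        congr 2
        ring
      calc (∫ y in Ω, J (x - y) * v y t) ≤ E := hIvle x hx t
        _ = E * 1 := (mul_one E).symm
        _ ≤ E * (E * v x t) := mul_le_mul_of_nonneg_left h6 hEpos.le
        _ = Real.exp (4*Ma/τ) * v x t := c2
    exact mul_le_mul_of_nonneg_left hE1 hμ.le
  have c3 : μ * (- h1 x) * v x t ≤ μ * M * v x t := by
    have hh := (abs_le.mp (hM x hx)).1
    have : μ * (- h1 x) ≤ μ * M := mul_le_mul_of_nonneg_left (by linarith) hμ.le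
    exact mul_le_mul_of_nonneg_right this hvpos'.le
  have c4 : (∫ s in (0:ℝ)..1, a x s) * v x t ≤ SA * v x t :=
    mul_le_mul_of_nonneg_right (hSA x hx) hvpos'.le
  nlinarith [c1, c3, c4]

end Stmt7Aux3
set_option maxHeartbeats 1000000 in
theorem stmt_7x {N : ℕ} (hN : 1 ≤ N) (Ω : Set (Euc N)) (hΩ : domainHyp Ω)
    (J : Euc N → ℝ) (hJ : kernelHyp J)
    (τ : ℝ) (hτ : 0 < τ)
    (h : ℝ → Euc N → ℝ)
    (hH1 : ∀ s ∈ Ioi (0:ℝ), ContinuousOn (h s) (closure Ω))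
    (hH2 : ∃ M : ℝ, ∀ s ∈ Ioi (0:ℝ), ∀ x ∈ closure Ω, |h s x| ≤ M)
    (a : Euc N → ℝ → ℝ) (ha : coeffHyp Ω a) :
    ContinuousOn (fun μ : ℝ => lambdaP Ω (Lop Ω J τ μ 1 0 (h 1) a)) (Ioi 0) ∧
    Tendsto (fun μ : ℝ => lambdaP Ω (Lop Ω J τ μ 1 0 (h 1) a)) (𝓝[>] (0:ℝ))
      (𝓝 (-sSup ((fun x => ∫ t in (0:ℝ)..1, a x t) '' closure Ω))) := by
  obtain ⟨hΩne, hΩo, -, hΩb⟩ := hΩ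
  obtain ⟨hJc, hJnn, -, hJsupp, -, hJint⟩ := hJ
  obtain ⟨hac, hap⟩ := ha
  obtain ⟨M, hM'⟩ := hH2
  have hM : ∀ x ∈ closure Ω, |h 1 x| ≤ M := hM' 1 (mem_Ioi.mpr one_pos)
  have hKne : (closure Ω).Nonempty := hΩne.closure
  have hK : IsCompact (closure Ω) :=
    Metric.isCompact_of_isClosed_isBounded isClosed_closure hΩb.closure
  -- bound on a
  obtain ⟨Ma, hMa'⟩ := (hK.prod (isCompact_Icc (a := (0:ℝ)) (b := 1))).exists_bound_of_continuousOn
      (hac.mono (prod_mono subset_rfl (subset_univ _)))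
  have hMa : ∀ x ∈ closure Ω, ∀ t : ℝ, |a x t| ≤ Ma := by
    intro x hx t
    have hper : Function.Periodic (a x) 1 := fun s => hap x s
    obtain ⟨s, hs, hst⟩ := hper.exists_mem_Ico₀ one_pos t
    rw [hst]
    have := hMa' (x, s) ⟨hx, ⟨hs.1, hs.2.le⟩⟩
    simpa [Real.norm_eq_abs] using this
  -- the mean of a and its sup
  set φ : Euc N → ℝ := fun x => ∫ t in (0:ℝ)..1, a x t with hφ_def
  set SA : ℝ := sSup (φ '' closure Ω) with hSA_def
  have hφbd : ∀ x ∈ closure Ω, φ x ≤ Ma := by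
    intro x hx
    have := intervalIntegral.norm_integral_le_of_norm_le_const
      (C := Ma) (f := a x) (a := 0) (b := 1)
      (fun u _ => by rw [Real.norm_eq_abs]; exact hMa x hx u)
    rw [Real.norm_eq_abs] at this
    simp only [hφ_def]
    calc (∫ t in (0:ℝ)..1, a x t) ≤ |∫ t in (0:ℝ)..1, a x t| := le_abs_self _
      _ ≤ Ma := by simpa using this
  have himg_ne : (φ '' closure Ω).Nonempty := hKne.image _
  have himg_bdd : BddAbove (φ '' closure Ω) := by
    refine ⟨Ma, fun y hy => ?_⟩
    obtain ⟨x, hx, rfl⟩ := hy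
    exact hφbd x hx
  have hSA : ∀ x ∈ closure Ω, φ x ≤ SA := fun x hx => le_csSup himg_bdd ⟨x, hx, rfl⟩
  -- the eigenvalue function
  set Λ : ℝ → ℝ := fun μ => sSup (Sset Ω J τ (h 1) a μ) with hΛ_def
  set Call : ℝ := Real.exp (4*Ma/τ) + M with hCall_def
  have hne : ∀ μ : ℝ, 0 < μ → (Sset Ω J τ (h 1) a μ).Nonempty := fun μ hμ =>
    ⟨_, Sset_lower hΩo hΩb hJc hJnn hJsupp hJint hτ hM hMa hSA hac hap hμ⟩
  obtain ⟨x₀, hx₀⟩ := hKne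
  have hbdd : ∀ μ : ℝ, 0 ≤ μ → BddAbove (Sset Ω J τ (h 1) a μ) := by
    intro μ hμ0
    refine ⟨μ * h 1 x₀ - φ x₀, fun l hl => ?_⟩
    have := Sset_upper hΩo hJnn hτ hμ0 hl hx₀ hac
    simp only [hφ_def]
    linarith
  have hlow : ∀ μ : ℝ, 0 < μ → -SA - μ * Call ≤ Λ μ := fun μ hμ =>
    le_csSup (hbdd μ hμ.le)
      (Sset_lower hΩo hΩb hJc hJnn hJsupp hJint hτ hM hMa hSA hac hap hμ)
  have hupp : ∀ μ : ℝ, 0 < μ → Λ μ ≤ μ * M - SA := by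
    intro μ hμ
    refine csSup_le (hne μ hμ) fun l hl => ?_
    have hSAle : SA ≤ μ * M - l := by
      refine csSup_le himg_ne fun y hy => ?_
      obtain ⟨x, hx, rfl⟩ := hy
      have h2 := Sset_upper hΩo hJnn hτ hμ.le hl hx hac
      have h3 : μ * h 1 x ≤ μ * M :=
        mul_le_mul_of_nonneg_left (abs_le.mp (hM x hx)).2 hμ.le
      simp only [hφ_def]
      linarith
    linarith
  have hmono : ∀ {p q : ℝ}, 0 < p → p ≤ q → Λ q ≤ Λ p + (q - p) * M := by
    intro p q hp hpq
    refine csSup_le (hne q (hp.trans_le hpq)) fun l hl => ?_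
    have := le_csSup (hbdd p hp.le) (Sset_mono hΩo hJnn hM hpq hl)
    linarith
  have hGM : ∀ {p q : ℝ}, 0 < p → 0 < q →
      (Λ p + Λ q)/2 - ((p + q)/2 - Real.sqrt (p*q)) * M ≤ Λ (Real.sqrt (p*q)) := by
    intro p q hp hq
    have hg : 0 < Real.sqrt (p*q) := Real.sqrt_pos.mpr (mul_pos hp hq)
    have step2 : ∀ l₁ ∈ Sset Ω J τ (h 1) a p,
        (l₁ + Λ q)/2 - ((p + q)/2 - Real.sqrt (p*q)) * M ≤ Λ (Real.sqrt (p*q)) := by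
      intro l₁ h₁
      have : Λ q ≤ 2*(Λ (Real.sqrt (p*q)) + ((p + q)/2 - Real.sqrt (p*q)) * M) - l₁ := by
        refine csSup_le (hne q hq) fun l₂ h₂ => ?_
        have := le_csSup (hbdd _ hg.le) (Sset_GM hΩo hΩb hJc hJnn hτ hM hp hq h₁ h₂)
        linarith
      linarith
    have step3 : Λ p ≤ 2*(Λ (Real.sqrt (p*q)) + ((p + q)/2 - Real.sqrt (p*q)) * M) - Λ q := by
      refine csSup_le (hne p hp) fun l₁ h₁ => ?_
      have := step2 l₁ h₁
      linarith
    linarith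
  have hΛrw : (fun μ : ℝ => lambdaP Ω (Lop Ω J τ μ 1 0 (h 1) a)) = Λ := rfl
  rw [hΛrw]
  constructor
  · -- continuity
    intro μ₀ hμ₀'
    have hμ₀ : 0 < μ₀ := hμ₀'
    set c : ℝ := μ₀/2 with hc_def
    have hc : 0 < c := half_pos hμ₀
    have hcμ : c < μ₀ := half_lt_self hμ₀
    set G : ℝ → ℝ := fun μ => (max μ c) * M - Λ (max μ c) with hG_def
    have hGmono : Monotone G := by
      intro p q hpq
      have hp : 0 < max p c := lt_of_lt_of_le hc (le_max_right _ _)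
      have hmax : max p c ≤ max q c := max_le_max hpq le_rfl
      have := hmono hp hmax
      simp only [hG_def]
      linarith
    have hA := hGmono.tendsto_nhdsLT μ₀
    have hB := hGmono.tendsto_nhdsGT μ₀
    set SG : ℝ := sSup (G '' Iio μ₀) with hSG_def
    set IG : ℝ := sInf (G '' Ioi μ₀) with hIG_def
    have hΛeq : ∀ μ : ℝ, c < μ → Λ μ = μ * M - G μ := by
      intro μ hμc
      simp only [hG_def, max_eq_left hμc.le]
      ring
    set A : ℝ := μ₀ * M - SG with hA_def
    set B : ℝ := μ₀ * M - IG with hB_def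
    have hidM : Tendsto (fun μ : ℝ => μ * M) (𝓝 μ₀) (𝓝 (μ₀ * M)) :=
      (continuous_id.mul continuous_const).tendsto μ₀
    have hAΛ : Tendsto Λ (𝓝[<] μ₀) (𝓝 A) := by
      have h1 : Tendsto (fun μ => μ * M - G μ) (𝓝[<] μ₀) (𝓝 A) :=
        (hidM.mono_left nhdsWithin_le_nhds).sub hA
      refine h1.congr' ?_
      filter_upwards [Ioo_mem_nhdsLT_of_mem (⟨hcμ, le_rfl⟩ : μ₀ ∈ Ioc c μ₀)] with μ hμ
      exact (hΛeq μ hμ.1).symm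
    have hBΛ : Tendsto Λ (𝓝[>] μ₀) (𝓝 B) := by
      have h1 : Tendsto (fun μ => μ * M - G μ) (𝓝[>] μ₀) (𝓝 B) :=
        (hidM.mono_left nhdsWithin_le_nhds).sub hB
      refine h1.congr' ?_
      filter_upwards [self_mem_nhdsWithin] with μ hμ
      exact (hΛeq μ (hcμ.trans hμ)).symm
    -- Λ μ₀ ≤ A
    have h1A : Λ μ₀ ≤ A := by
      refine le_of_tendsto_of_tendsto
        (f := fun μ : ℝ => Λ μ₀ - (μ₀ - μ) * M) (g := Λ) (b := 𝓝[<] μ₀) ?_ hAΛ ?_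
      · have : Tendsto (fun μ : ℝ => Λ μ₀ - (μ₀ - μ) * M) (𝓝 μ₀) (𝓝 (Λ μ₀ - (μ₀ - μ₀) * M)) :=
          Tendsto.sub tendsto_const_nhds
            (((continuous_const.sub continuous_id).mul continuous_const).tendsto μ₀)
        simpa using this.mono_left nhdsWithin_le_nhds
      · filter_upwards [Ioo_mem_nhdsLT_of_mem (⟨hμ₀, le_rfl⟩ : μ₀ ∈ Ioc 0 μ₀)] with μ hμ
        have := hmono hμ.1 hμ.2.le
        linarith
    -- B ≤ Λ μ₀
    have h2B : B ≤ Λ μ₀ := by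
      refine le_of_tendsto_of_tendsto (f := Λ)
        (g := fun μ : ℝ => Λ μ₀ + (μ - μ₀) * M) (b := 𝓝[>] μ₀) hBΛ ?_ ?_
      · have : Tendsto (fun μ : ℝ => Λ μ₀ + (μ - μ₀) * M) (𝓝 μ₀) (𝓝 (Λ μ₀ + (μ₀ - μ₀) * M)) :=
          Tendsto.add tendsto_const_nhds
            (((continuous_id.sub continuous_const).mul continuous_const).tendsto μ₀)
        simpa using this.mono_left nhdsWithin_le_nhds
      · filter_upwards [self_mem_nhdsWithin] with μ hμ
        have := hmono hμ₀ (le_of_lt hμ)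
        linarith
    -- midpoint inequality along a geometric triple forces A ≤ B
    have hkey : ∀ s : ℝ, 1 < s →
        (Λ (μ₀/s) + Λ (μ₀*s^3))/2 - ((μ₀/s + μ₀*s^3)/2 - μ₀*s)*M ≤ Λ (μ₀*s) := by
      intro s hs
      have hs0 : 0 < s := lt_trans one_pos hs
      have hp : 0 < μ₀/s := div_pos hμ₀ hs0
      have hq : 0 < μ₀*s^3 := by positivity
      have hgm := hGM hp hq
      have hsq : Real.sqrt (μ₀/s * (μ₀*s^3)) = μ₀*s := by
        rw [show μ₀/s * (μ₀*s^3) = (μ₀*s)^2 by field_simp]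
        exact Real.sqrt_sq (by positivity)
      rwa [hsq] at hgm
    have hps : Tendsto (fun s : ℝ => μ₀/s) (𝓝[>] (1:ℝ)) (𝓝[<] μ₀) := by
      rw [tendsto_nhdsWithin_iff]
      constructor
      · have : Tendsto (fun s : ℝ => μ₀/s) (𝓝 (1:ℝ)) (𝓝 (μ₀/1)) :=
          (continuousAt_const.div continuousAt_id one_ne_zero).tendsto
        simpa using this.mono_left nhdsWithin_le_nhds
      · filter_upwards [self_mem_nhdsWithin] with s hs
        have hs0 : 0 < s := lt_trans one_pos hs
        rw [mem_Iio, div_lt_iff₀ hs0]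
        nlinarith [mul_pos hμ₀ (sub_pos.mpr hs)]
    have hms : Tendsto (fun s : ℝ => μ₀*s) (𝓝[>] (1:ℝ)) (𝓝[>] μ₀) := by
      rw [tendsto_nhdsWithin_iff]
      constructor
      · have : Tendsto (fun s : ℝ => μ₀*s) (𝓝 (1:ℝ)) (𝓝 (μ₀*1)) :=
          (continuousAt_const.mul continuousAt_id).tendsto
        simpa using this.mono_left nhdsWithin_le_nhds
      · filter_upwards [self_mem_nhdsWithin] with s hs
        rw [mem_Ioi]
        nlinarith [mul_pos hμ₀ (sub_pos.mpr hs)]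
    have hqs : Tendsto (fun s : ℝ => μ₀*s^3) (𝓝[>] (1:ℝ)) (𝓝[>] μ₀) := by
      rw [tendsto_nhdsWithin_iff]
      constructor
      · have : Tendsto (fun s : ℝ => μ₀*s^3) (𝓝 (1:ℝ)) (𝓝 (μ₀*1^3)) :=
          (continuousAt_const.mul (continuousAt_id.pow 3)).tendsto
        simpa using this.mono_left nhdsWithin_le_nhds
      · filter_upwards [self_mem_nhdsWithin] with s hs
        rw [mem_Ioi]
        have hs3 : 1 < s^3 := one_lt_pow₀ hs (by norm_num)
        nlinarith [mul_pos hμ₀ (sub_pos.mpr hs3)]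
    have herr : Tendsto (fun s : ℝ => ((μ₀/s + μ₀*s^3)/2 - μ₀*s)*M) (𝓝[>] (1:ℝ)) (𝓝 0) := by
      have hca : ContinuousAt (fun s : ℝ => ((μ₀/s + μ₀*s^3)/2 - μ₀*s)*M) 1 :=
        ((((continuousAt_const.div continuousAt_id one_ne_zero).add
          (continuousAt_const.mul (continuousAt_id.pow 3))).div_const 2).sub
          (continuousAt_const.mul continuousAt_id)).mul continuousAt_const
      have hv : ((μ₀/1 + μ₀*1^3)/2 - μ₀*1)*M = 0 := by norm_num
      have := hca.tendsto.mono_left (nhdsWithin_le_nhds (s := Ioi (1:ℝ)))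
      rwa [hv] at this
    have h4 : (A + B)/2 - 0 ≤ B := by
      refine le_of_tendsto_of_tendsto
        (f := fun s : ℝ => (Λ (μ₀/s) + Λ (μ₀*s^3))/2 - ((μ₀/s + μ₀*s^3)/2 - μ₀*s)*M)
        (g := fun s : ℝ => Λ (μ₀*s)) (b := 𝓝[>] (1:ℝ)) ?_ (hBΛ.comp hms) ?_
      · exact (((hAΛ.comp hps).add (hBΛ.comp hqs)).div_const 2).sub herr
      · filter_upwards [self_mem_nhdsWithin] with s hs using hkey s hs
    have hAB : A ≤ B := by linarith
    have hAeq : A = Λ μ₀ := le_antisymm (hAB.trans h2B) h1A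
    have hBeq : B = Λ μ₀ := le_antisymm h2B (h1A.trans hAB)
    have hfin : Tendsto Λ (𝓝 μ₀) (𝓝 (Λ μ₀)) := by
      rw [← nhdsNE_sup_pure μ₀, ← Iio_union_Ioi, nhdsWithin_union]
      rw [hAeq] at hAΛ
      rw [hBeq] at hBΛ
      exact tendsto_sup.mpr ⟨tendsto_sup.mpr ⟨hAΛ, hBΛ⟩, tendsto_pure_nhds Λ μ₀⟩
    exact (ContinuousAt.continuousWithinAt hfin : ContinuousWithinAt Λ (Ioi 0) μ₀)
  · -- the limit
    refine tendsto_of_tendsto_of_tendsto_of_le_of_le'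
      (g := fun μ : ℝ => -SA - μ * Call) (h := fun μ : ℝ => μ * M - SA) ?_ ?_ ?_ ?_
    · have : Tendsto (fun μ : ℝ => -SA - μ * Call) (𝓝 0) (𝓝 (-SA - 0 * Call)) :=
        (continuous_const.sub (continuous_id.mul continuous_const)).tendsto 0
      simpa using this.mono_left nhdsWithin_le_nhds
    · have : Tendsto (fun μ : ℝ => μ * M - SA) (𝓝 0) (𝓝 (0 * M - SA)) :=
        ((continuous_id.mul continuous_const).sub continuous_const).tendsto 0
      simpa using this.mono_left nhdsWithin_le_nhds
    · filter_upwards [self_mem_nhdsWithin] with μ hμ using hlow μ hμ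
    · filter_upwards [self_mem_nhdsWithin] with μ hμ using hupp μ hμ

/-- For `σ = 1`, `m = 0`: `μ ↦ λ_p(L_Ω^{τ,μ,1,0})` is continuous on `(0,∞)` and
tends to `−max_{Ω̄} â` as `μ → 0⁺`. -/
theorem stmt_7 {N : ℕ} (hN : 1 ≤ N) (Ω : Set (Euc N)) (hΩ : domainHyp Ω)
    (J : Euc N → ℝ) (hJ : kernelHyp J)
    (τ : ℝ) (hτ : 0 < τ)
    (h : ℝ → Euc N → ℝ)
    (hH1 : ∀ s ∈ Ioi (0:ℝ), ContinuousOn (h s) (closure Ω))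
    (hH2 : ∃ M : ℝ, ∀ s ∈ Ioi (0:ℝ), ∀ x ∈ closure Ω, |h s x| ≤ M)
    (a : Euc N → ℝ → ℝ) (ha : coeffHyp Ω a) :
    ContinuousOn (fun μ : ℝ => lambdaP Ω (Lop Ω J τ μ 1 0 (h 1) a)) (Ioi 0) ∧
    Tendsto (fun μ : ℝ => lambdaP Ω (Lop Ω J τ μ 1 0 (h 1) a)) (𝓝[>] (0:ℝ))
      (𝓝 (-sSup ((fun x => ∫ t in (0:ℝ)..1, a x t) '' closure Ω))) := by
  exact stmt_7x hN Ω hΩ J hJ τ hτ h hH1 hH2 a ha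
end
end

section
/- Fix τ, μ > 0 and m = 0, and suppose there is a constant c such that h^σ converges to c uniformly on Ω̄ as σ → ∞. Then lim_{σ→∞} λ_p(L_Ω^{τ,μ,σ,0}) = μ c − max_{x ∈ Ω̄} â(x). -/
open MeasureTheory Set Filter Topology Bornology

noncomputable section

open intervalIntegral in
private lemma aux_log_int {τ : ℝ} (hτ : 0 < τ) (w : ℝ → ℝ) (hw : ContDiff ℝ 1 w)
    (hpos : ∀ t, 0 < w t) (hper : w 1 = w 0) (q : ℝ → ℝ) (hq : Continuous q)
    (hineq : ∀ t, q t * w t ≤ τ * deriv w t) : ∫ t in (0:ℝ)..1, q t ≤ 0 := by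
  have hdw : ∀ t, HasDerivAt w (deriv w t) t :=
    fun t => (hw.differentiable one_ne_zero t).hasDerivAt
  have hderiv : ∀ t, HasDerivAt (fun t => Real.log (w t)) (deriv w t / w t) t :=
    fun t => (hdw t).log (ne_of_gt (hpos t))
  have hcontw' : Continuous (deriv w) := hw.continuous_deriv le_rfl
  have hcontp : Continuous (fun t => deriv w t / w t) :=
    hcontw'.div (hw.continuous) (fun t => ne_of_gt (hpos t))
  have hFTC : ∫ t in (0:ℝ)..1, deriv w t / w t
      = Real.log (w 1) - Real.log (w 0) :=
    integral_eq_sub_of_hasDerivAt (fun t _ => hderiv t) (hcontp.intervalIntegrable 0 1)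
  have h0 : ∫ t in (0:ℝ)..1, deriv w t / w t = 0 := by rw [hFTC, hper, sub_self]
  have hmono : ∫ t in (0:ℝ)..1, q t ≤ ∫ t in (0:ℝ)..1, τ * (deriv w t / w t) := by
    apply integral_mono_on zero_le_one (hq.intervalIntegrable 0 1)
      ((continuous_const.fun_mul hcontp).intervalIntegrable 0 1)
    intro t _
    rw [mul_div_assoc' τ, le_div_iff₀ (hpos t)]
    exact hineq t
  have hz : ∫ t in (0:ℝ)..1, τ * (deriv w t / w t) = 0 := by
    rw [intervalIntegral.integral_const_mul, h0, mul_zero]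
  linarith

private lemma aux_param_cont {N : ℕ} {K : Set (Euc N)} (hK : IsCompact K)
    {a : Euc N → ℝ → ℝ}
    (haC : ContinuousOn (fun p : Euc N × ℝ => a p.1 p.2) (K ×ˢ (univ : Set ℝ)))
    (hax : ∀ x ∈ K, Continuous (a x)) (t : ℝ) :
    ContinuousOn (fun x => ∫ s in (0:ℝ)..t, a x s) K := by
  rw [Metric.continuousOn_iff]
  intro x hx ε hε
  have hScomp : IsCompact (K ×ˢ uIcc (0:ℝ) t) := hK.prod isCompact_uIcc
  have haS : ContinuousOn (fun p : Euc N × ℝ => a p.1 p.2) (K ×ˢ uIcc (0:ℝ) t) :=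
    haC.mono (prod_mono_right (subset_univ _))
  have hu := hScomp.uniformContinuousOn_of_continuous haS
  rw [Metric.uniformContinuousOn_iff] at hu
  have hep : 0 < ε / (|t| + 1) := by positivity
  obtain ⟨δ, hδ0, hδ⟩ := hu _ hep
  refine ⟨δ, hδ0, fun y hy hdist => ?_⟩
  have hsub : ∀ s ∈ Set.uIoc (0:ℝ) t, ‖a y s - a x s‖ ≤ ε / (|t| + 1) := by
    intro s hs
    have hs' : s ∈ uIcc (0:ℝ) t := uIoc_subset_uIcc hs
    have hd : dist ((y, s) : Euc N × ℝ) ((x, s) : Euc N × ℝ) < δ := by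
      rw [Prod.dist_eq]
      simpa [dist_self, max_eq_left dist_nonneg] using hdist
    have := hδ (y, s) ⟨hy, hs'⟩ (x, s) ⟨hx, hs'⟩ hd
    rw [Real.norm_eq_abs, ← Real.dist_eq]
    exact le_of_lt this
  have hint : (∫ s in (0:ℝ)..t, a y s) - (∫ s in (0:ℝ)..t, a x s)
      = ∫ s in (0:ℝ)..t, (a y s - a x s) :=
    (intervalIntegral.integral_sub ((hax y hy).intervalIntegrable 0 t)
      ((hax x hx).intervalIntegrable 0 t)).symm
  rw [Real.dist_eq, ← Real.norm_eq_abs, hint]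
  calc ‖∫ s in (0:ℝ)..t, (a y s - a x s)‖ ≤ (ε / (|t| + 1)) * |t - 0| :=
        intervalIntegral.norm_integral_le_of_norm_le_const hsub
    _ < ε := by
        rw [sub_zero]
        calc (ε / (|t| + 1)) * |t| < (ε / (|t| + 1)) * (|t| + 1) :=
              mul_lt_mul_of_pos_left (by linarith) hep
          _ = ε := by field_simp

/-- For `m = 0`, if `h^σ → c` uniformly on `Ω̄` as `σ → ∞`, then
`λ_p(L_Ω^{τ,μ,σ,0}) → μ c − max_{Ω̄} â` as `σ → ∞`. -/
theorem stmt_9 {N : ℕ} (hN : 1 ≤ N) (Ω : Set (Euc N)) (hΩ : domainHyp Ω)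
    (J : Euc N → ℝ) (hJ : kernelHyp J)
    (τ μ : ℝ) (hτ : 0 < τ) (hμ : 0 < μ)
    (h : ℝ → Euc N → ℝ)
    (hH1 : ∀ s ∈ Ioi (0:ℝ), ContinuousOn (h s) (closure Ω))
    (hH2 : ∃ M : ℝ, ∀ s ∈ Ioi (0:ℝ), ∀ x ∈ closure Ω, |h s x| ≤ M)
    (a : Euc N → ℝ → ℝ) (ha : coeffHyp Ω a)
    (c : ℝ) (hconv : TendstoUniformlyOn h (fun _ => c) atTop (closure Ω)) :
    Tendsto (fun σ : ℝ => lambdaP Ω (Lop Ω J τ μ σ 0 (h σ) a)) atTop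
      (𝓝 (μ * c - sSup ((fun x => ∫ t in (0:ℝ)..1, a x t) '' closure Ω))) := by
  classical
  obtain ⟨hnee, hopen, hconn, hbdd⟩ := hΩ
  obtain ⟨haC, haper⟩ := ha
  set K := closure Ω with hKdef
  have hKcomp : IsCompact K := hbdd.isCompact_closure
  have hKne : K.Nonempty := hnee.closure
  have hax : ∀ x ∈ K, Continuous (a x) := by
    intro x hx
    exact haC.comp_continuous (Continuous.prodMk_right x) (fun t => ⟨hx, mem_univ t⟩)
  set ab := fun x : Euc N => ∫ t in (0:ℝ)..1, a x t with habdef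
  have habC : ContinuousOn ab K := aux_param_cont hKcomp haC hax 1
  obtain ⟨x₀, hx₀K, hx₀max⟩ := hKcomp.exists_isMaxOn hKne habC
  have hAmaxEq : sSup (ab '' K) = ab x₀ :=
    IsGreatest.csSup_eq ⟨⟨x₀, hx₀K, rfl⟩, by rintro y ⟨z, hz, rfl⟩; exact hx₀max hz⟩
  rw [hAmaxEq]
  -- bound for a on K × [0,1]
  obtain ⟨A, hA⟩ := (hKcomp.prod (isCompact_Icc : IsCompact (Icc (0:ℝ) 1))).exists_bound_of_continuousOn
    (haC.mono (prod_mono_right (subset_univ _)))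
  have hA' : ∀ x ∈ K, ∀ s ∈ Icc (0:ℝ) 1, |a x s| ≤ A := fun x hx s hs => by
    simpa [Real.norm_eq_abs] using hA (x, s) ⟨hx, hs⟩
  have hA0 : 0 ≤ A := le_trans (abs_nonneg _) (hA' x₀ hx₀K 0 ⟨le_rfl, zero_le_one⟩)
  -- kernel bound
  obtain ⟨CJ, hCJ⟩ := (isCompact_closedBall (0:Euc N) 1).exists_bound_of_continuousOn
    hJ.1.continuousOn
  have hCJ0 : 0 ≤ CJ := le_trans (norm_nonneg _) (hCJ 0 (Metric.mem_closedBall_self zero_le_one))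
  have hJle : ∀ z, J z ≤ CJ := by
    intro z
    by_cases hz : ‖z‖ ≤ 1
    · have := hCJ z (by simpa [Metric.mem_closedBall, dist_zero_right] using hz)
      calc J z ≤ |J z| := le_abs_self _
        _ ≤ CJ := by simpa [Real.norm_eq_abs] using this
    · rw [hJ.2.2.2.1 z (not_le.mp hz)]; exact hCJ0
  -- modified coefficient b
  set b : Euc N → ℝ → ℝ := fun x t => if x ∈ K then a x t else 0 with hbdef
  have hbeq : ∀ x ∈ K, ∀ t, b x t = a x t := fun x hx t => if_pos hx
  have hbx : ∀ x, Continuous (b x) := by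
    intro x
    by_cases hx : x ∈ K
    · simpa [hbdef, hx] using hax x hx
    · simp [hbdef, hx, continuous_const]
  have hbper : ∀ x, Function.Periodic (b x) 1 := by
    intro x t
    by_cases hx : x ∈ K <;> simp [hbdef, hx, haper]
  set g : Euc N → ℝ → ℝ := fun x t => ∫ s in (0:ℝ)..t, b x s with hgdef
  set abb : Euc N → ℝ := fun x => g x 1 with habbdef
  have habbeq : ∀ x ∈ K, abb x = ab x := by
    intro x hx
    simp only [habbdef, hgdef, habdef]
    exact intervalIntegral.integral_congr (fun s _ => hbeq x hx s)
  set E : Euc N → ℝ → ℝ := fun x t => (1/τ) * (g x t - t * abb x) with hEdef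
  set v : Euc N → ℝ → ℝ := fun x t => Real.exp (E x t) with hvdef
  have hvpos : ∀ x t, 0 < v x t := fun x t => Real.exp_pos _
  have hgd : ∀ x t, HasDerivAt (g x) (b x t) t :=
    fun x t => ((hbx x).integral_hasStrictDerivAt 0 t).hasDerivAt
  have hvd : ∀ x t, HasDerivAt (v x) (v x t * ((1/τ) * (b x t - abb x))) t := by
    intro x t
    have h1 : HasDerivAt (fun t : ℝ => t * abb x) (abb x) t := by
      simpa using (hasDerivAt_id t).mul_const (abb x)
    have hE : HasDerivAt (E x) ((1/τ) * (b x t - abb x)) t :=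
      ((hgd x t).sub h1).const_mul (1/τ)
    exact hE.exp
  have hvderiv : ∀ x t, deriv (v x) t = v x t * ((1/τ) * (b x t - abb x)) :=
    fun x t => (hvd x t).deriv
  have hvper : ∀ x t, v x (t + 1) = v x t := by
    intro x t
    have hsplit : g x (t+1) = g x t + ∫ s in t..(t+1), b x s :=
      (intervalIntegral.integral_add_adjacent_intervals ((hbx x).intervalIntegrable 0 t)
        ((hbx x).intervalIntegrable t (t+1))).symm
    have hper1 : (∫ s in t..(t+1), b x s) = abb x := by
      have := (hbper x).intervalIntegral_add_eq t 0
      simpa [habbdef, hgdef] using this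
    simp only [hvdef, hEdef]
    rw [hsplit, hper1]
    ring_nf
  have hvfract : ∀ x t, v x t = v x (Int.fract t) := by
    intro x t
    have hper : Function.Periodic (v x) 1 := fun s => hvper x s
    have h2 := hper.sub_int_mul_eq (x := t) ⌊t⌋
    rw [mul_one] at h2
    rw [← Int.self_sub_floor]
    exact h2.symm
  -- bounds for v
  have hgb : ∀ x ∈ K, ∀ t ∈ Icc (0:ℝ) 1, |g x t| ≤ A := by
    intro x hx t ht
    have hbnd : ∀ s ∈ Set.uIoc (0:ℝ) t, ‖b x s‖ ≤ A := by
      intro s hs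
      rw [Set.uIoc_of_le ht.1] at hs
      have hs' : s ∈ Icc (0:ℝ) 1 := ⟨le_of_lt hs.1, le_trans hs.2 ht.2⟩
      rw [Real.norm_eq_abs, hbeq x hx s]
      exact hA' x hx s hs'
    have h1 := intervalIntegral.norm_integral_le_of_norm_le_const hbnd
    rw [Real.norm_eq_abs] at h1
    calc |g x t| ≤ A * |t - 0| := h1
      _ ≤ A * 1 := by
          apply mul_le_mul_of_nonneg_left _ hA0
          rw [sub_zero, abs_of_nonneg ht.1]; exact ht.2
      _ = A := mul_one A
  have habbb : ∀ x ∈ K, |abb x| ≤ A := fun x hx => hgb x hx 1 ⟨zero_le_one, le_rfl⟩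
  have hEb : ∀ x ∈ K, ∀ t ∈ Icc (0:ℝ) 1, |E x t| ≤ 2*A/τ := by
    intro x hx t ht
    have h1 := hgb x hx t ht
    have h3 : |t * abb x| ≤ A := by
      rw [abs_mul]
      calc |t| * |abb x| ≤ 1 * A :=
            mul_le_mul (by rw [abs_of_nonneg ht.1]; exact ht.2) (habbb x hx)
              (abs_nonneg _) zero_le_one
        _ = A := one_mul A
    simp only [hEdef]
    rw [abs_mul, abs_of_nonneg (by positivity : (0:ℝ) ≤ 1/τ)]
    calc (1/τ) * |g x t - t * abb x| ≤ (1/τ) * (A + A) := by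
          apply mul_le_mul_of_nonneg_left _ (by positivity)
          calc |g x t - t * abb x| ≤ |g x t| + |t * abb x| := abs_sub _ _
            _ ≤ A + A := add_le_add h1 h3
      _ = 2*A/τ := by ring
  have hvub : ∀ x ∈ K, ∀ t, v x t ≤ Real.exp (2*A/τ) := by
    intro x hx t
    rw [hvfract x t]
    have hf : Int.fract t ∈ Icc (0:ℝ) 1 := ⟨Int.fract_nonneg t, le_of_lt (Int.fract_lt_one t)⟩
    simp only [hvdef]
    exact Real.exp_le_exp.mpr (le_of_abs_le (hEb x hx _ hf))
  have hvlb : ∀ x ∈ K, ∀ t, Real.exp (-(2*A/τ)) ≤ v x t := by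
    intro x hx t
    rw [hvfract x t]
    have hf : Int.fract t ∈ Icc (0:ℝ) 1 := ⟨Int.fract_nonneg t, le_of_lt (Int.fract_lt_one t)⟩
    simp only [hvdef]
    exact Real.exp_le_exp.mpr (neg_le_of_abs_le (hEb x hx _ hf))
  -- memChi for v
  have hvmem : memChi Ω v := by
    refine ⟨?_, fun x _ => ?_, fun x t => hvper x t⟩
    · intro t
      have h1 : ContinuousOn (fun x => g x t) K := by
        apply (aux_param_cont hKcomp haC hax t).congr
        intro x hx
        simp only [hgdef]
        exact intervalIntegral.integral_congr (fun s _ => hbeq x hx s)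
      have h2 : ContinuousOn abb K := habC.congr (fun x hx => habbeq x hx)
      have h3 : ContinuousOn (fun x => E x t) K := by
        simp only [hEdef]
        exact continuousOn_const.mul (h1.sub (continuousOn_const.mul h2))
      simp only [hvdef]
      exact Real.continuous_exp.comp_continuousOn h3
    · rw [contDiff_one_iff_deriv]
      refine ⟨fun t => (hvd x t).differentiableAt, ?_⟩
      have heq : deriv (v x) = fun t => v x t * ((1/τ) * (b x t - abb x)) :=
        funext (hvderiv x)
      rw [heq]
      have hvc : Continuous (v x) :=
        (Differentiable.continuous (fun t => (hvd x t).differentiableAt))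
      exact hvc.mul (continuous_const.mul ((hbx x).sub continuous_const))
  -- volume
  have hvolfin : volume Ω < ⊤ :=
    lt_of_le_of_lt (measure_mono subset_closure) hKcomp.measure_lt_top
  set vol := (volume Ω).toReal with hvoldef
  have hvol0 : 0 ≤ vol := ENNReal.toReal_nonneg
  -- the limit argument
  rw [Metric.tendsto_nhds]
  intro ε hε
  have hε2 : 0 < ε/2 := by positivity
  have hev1 : ∀ᶠ σ : ℝ in atTop, 0 < σ := eventually_gt_atTop 0
  have hev2 : ∀ᶠ σ : ℝ in atTop, ∀ x ∈ K, dist c (h σ x) < (ε/2) / (2*μ) :=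
    (Metric.tendstoUniformlyOn_iff.mp hconv) _ (by positivity)
  have htend : Tendsto (fun σ : ℝ => (μ * (CJ * (Real.exp (2*A/τ) * vol))) * ((σ ^ N)⁻¹))
      atTop (𝓝 0) := by
    have h1 : Tendsto (fun σ : ℝ => σ ^ N) atTop atTop :=
      tendsto_pow_atTop (by omega)
    have h2 : Tendsto (fun σ : ℝ => (σ ^ N)⁻¹) atTop (𝓝 0) := h1.inv_tendsto_atTop
    simpa using h2.const_mul (μ * (CJ * (Real.exp (2*A/τ) * vol)))
  have hev3 : ∀ᶠ σ : ℝ in atTop,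
      (μ * (CJ * (Real.exp (2*A/τ) * vol))) * ((σ ^ N)⁻¹) < (ε/2)/2 * Real.exp (-(2*A/τ)) := by
    apply htend.eventually_lt_const
    positivity
  filter_upwards [hev1, hev2, hev3] with σ hσ0 hσh hσI
  set S := {l : ℝ | ∃ w, memChi Ω w ∧ posOn Ω w ∧
    ∀ x ∈ closure Ω, ∀ t : ℝ, Lop Ω J τ μ σ 0 (h σ) a w x t + l * w x t ≤ 0} with hSdef
  have hlp : lambdaP Ω (Lop Ω J τ μ σ 0 (h σ) a) = sSup S := rfl
  -- integral bound
  have hIbound : ∀ x t, (∫ y in Ω, Jsc J σ (x - y) * v y t)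
      ≤ ((σ ^ N)⁻¹ * CJ * Real.exp (2*A/τ)) * vol := by
    intro x t
    have hb : ∀ y ∈ Ω, ‖Jsc J σ (x - y) * v y t‖ ≤ (σ ^ N)⁻¹ * CJ * Real.exp (2*A/τ) := by
      intro y hy
      have h1 : 0 ≤ Jsc J σ (x - y) := mul_nonneg (by positivity) (hJ.2.1 _)
      have h2 : Jsc J σ (x - y) ≤ (σ ^ N)⁻¹ * CJ := by
        rw [Jsc, one_div]
        exact mul_le_mul_of_nonneg_left (hJle _) (by positivity)
      have h3 : 0 < v y t := hvpos y t
      have h4 : v y t ≤ Real.exp (2*A/τ) := hvub y (subset_closure hy) t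
      rw [Real.norm_eq_abs, abs_of_nonneg (mul_nonneg h1 (le_of_lt h3))]
      exact mul_le_mul h2 h4 (le_of_lt h3) (by positivity)
    have hm : AEStronglyMeasurable (fun y => Jsc J σ (x - y) * v y t) (volume.restrict Ω) := by
      apply ContinuousOn.aestronglyMeasurable _ hopen.measurableSet
      apply ContinuousOn.mul
      · apply Continuous.continuousOn
        have : Continuous (fun y : Euc N => J (σ⁻¹ • (x - y))) :=
          hJ.1.comp (by fun_prop)
        simpa [Jsc] using continuous_const.fun_mul this
      · exact (hvmem.1 t).mono subset_closure
    have := norm_setIntegral_le_of_norm_le_const hvolfin hb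
    rw [Real.norm_eq_abs] at this
    calc (∫ y in Ω, Jsc J σ (x - y) * v y t) ≤ |∫ y in Ω, Jsc J σ (x - y) * v y t| :=
          le_abs_self _
      _ ≤ ((σ ^ N)⁻¹ * CJ * Real.exp (2*A/τ)) * vol := this
  -- membership of L - ε/2
  have hmem : (μ * c - ab x₀ - ε/2) ∈ S := by
    refine ⟨v, hvmem, fun x _ t => hvpos x t, ?_⟩
    intro x hx t
    simp only [Lop, Real.rpow_zero, div_one]
    have hD : -τ * deriv (v x) t = (abb x - b x t) * v x t := by
      rw [hvderiv]
      field_simp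
      ring
    rw [hD, hbeq x hx t, habbeq x hx]
    have hμI : μ * (∫ y in Ω, Jsc J σ (x - y) * v y t) ≤ ((ε/2)/2) * v x t := by
      calc μ * (∫ y in Ω, Jsc J σ (x - y) * v y t)
          ≤ μ * (((σ ^ N)⁻¹ * CJ * Real.exp (2*A/τ)) * vol) :=
            mul_le_mul_of_nonneg_left (hIbound x t) (le_of_lt hμ)
        _ = (μ * (CJ * (Real.exp (2*A/τ) * vol))) * ((σ ^ N)⁻¹) := by ring
        _ ≤ ((ε/2)/2) * Real.exp (-(2*A/τ)) := le_of_lt hσI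
        _ ≤ ((ε/2)/2) * v x t :=
            mul_le_mul_of_nonneg_left (hvlb x hx t) (by positivity)
    have hcoef : ab x - μ * h σ x + (μ * c - ab x₀ - ε/2) ≤ -((ε/2)/2) := by
      have h6 : ab x ≤ ab x₀ := hx₀max hx
      have h7 : μ * (c - h σ x) ≤ (ε/2) / 2 := by
        have h8 := le_of_lt (hσh x hx)
        rw [Real.dist_eq] at h8
        calc μ * (c - h σ x) ≤ μ * |c - h σ x| :=
              mul_le_mul_of_nonneg_left (le_abs_self _) (le_of_lt hμ)
          _ ≤ μ * ((ε/2)/(2*μ)) := mul_le_mul_of_nonneg_left h8 (le_of_lt hμ)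
          _ = (ε/2)/2 := by field_simp
      linarith
    nlinarith [hvpos x t, hcoef, hμI]
  -- upper bound for elements of S
  have hub : ∀ l ∈ S, l ≤ μ * c - ab x₀ + ε/2 := by
    rintro l ⟨v', hv'mem, hv'pos, hv'ineq⟩
    have hw1 : ContDiff ℝ 1 (v' x₀) := hv'mem.2.1 x₀ hx₀K
    have hwpos : ∀ t, 0 < v' x₀ t := fun t => hv'pos x₀ hx₀K t
    have hwper : v' x₀ 1 = v' x₀ 0 := by simpa using hv'mem.2.2 x₀ 0
    have hq : Continuous (fun t => a x₀ t + (l - μ * h σ x₀)) :=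
      (hax x₀ hx₀K).add continuous_const
    have hkey : ∀ t, (a x₀ t + (l - μ * h σ x₀)) * v' x₀ t ≤ τ * deriv (v' x₀) t := by
      intro t
      have hLop := hv'ineq x₀ hx₀K t
      simp only [Lop, Real.rpow_zero, div_one] at hLop
      have hI0 : 0 ≤ ∫ y in Ω, Jsc J σ (x₀ - y) * v' y t := by
        apply setIntegral_nonneg hopen.measurableSet
        intro y hy
        exact mul_nonneg (mul_nonneg (by positivity) (hJ.2.1 _))
          (le_of_lt (hv'pos y (subset_closure hy) t))
      nlinarith [mul_nonneg (le_of_lt hμ) hI0]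
    have hint := aux_log_int hτ (v' x₀) hw1 hwpos hwper _ hq hkey
    have hsplit : (∫ t in (0:ℝ)..1, (a x₀ t + (l - μ * h σ x₀)))
        = ab x₀ + (l - μ * h σ x₀) := by
      rw [intervalIntegral.integral_add ((hax x₀ hx₀K).intervalIntegrable 0 1)
        (intervalIntegrable_const)]
      simp [habdef]
    rw [hsplit] at hint
    have h7 : μ * (h σ x₀ - c) ≤ (ε/2) / 2 := by
      have h8 := le_of_lt (hσh x₀ hx₀K)
      rw [Real.dist_eq] at h8
      have h9 : |h σ x₀ - c| ≤ (ε/2)/(2*μ) := by rw [abs_sub_comm]; exact h8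
      calc μ * (h σ x₀ - c) ≤ μ * |h σ x₀ - c| :=
            mul_le_mul_of_nonneg_left (le_abs_self _) (le_of_lt hμ)
        _ ≤ μ * ((ε/2)/(2*μ)) := mul_le_mul_of_nonneg_left h9 (le_of_lt hμ)
        _ = (ε/2)/2 := by field_simp
    linarith
  have hSne : S.Nonempty := ⟨_, hmem⟩
  have hbdab : BddAbove S := ⟨μ * c - ab x₀ + ε/2, fun l hl => hub l hl⟩
  have h1 : μ * c - ab x₀ - ε/2 ≤ sSup S := le_csSup hbdab hmem
  have h2 : sSup S ≤ μ * c - ab x₀ + ε/2 := csSup_le hSne hub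
  rw [hlp, Real.dist_eq]
  rw [abs_lt]
  constructor <;> linarith
end
end
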